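/- arXiv:math/0105063 — 8 statements merged into one kernel-verified Lean document; each statement's English description precedes it below -/
import Mathlib

section
/- Let n ≥ 1 and let p be a polynomial in n variables over the complex numbers such that p(t₁,…,tₙ) ≠ 0 for every point (t₁,…,tₙ) ∈ ℂⁿ all of whose coordinates are nonzero. Then p is a nonzero constant multiple of a single monomial: there exist c ∈ ℂ with c ≠ 0 and exponents m₁,…,mₙ ∈ ℕ such that p = c·x₁^{m₁}⋯xₙ^{mₙ}. -/
open scoped BigOperators

lemma base_inj (N : ℕ) : ∀ (n : ℕ) (f g : ℕ → ℕ), (∀ i < n, f i < N) → (∀ i < n, g i < N) →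
    (∑ i ∈ Finset.range n, f i * N ^ i) = (∑ i ∈ Finset.range n, g i * N ^ i) →
    ∀ i < n, f i = g i := by
  intro n
  induction n with
  | zero => intro f g _ _ _ i hi; omega
  | succ n ih =>
    intro f g hf hg hsum i hi
    have hN : 0 < N := lt_of_le_of_lt (Nat.zero_le _) (hf 0 (Nat.succ_pos n))
    rw [Finset.sum_range_succ', Finset.sum_range_succ'] at hsum
    simp only [pow_zero, mul_one, pow_succ] at hsum
    have hA : ∀ (f : ℕ → ℕ), (∑ i ∈ Finset.range n, f (i+1) * (N ^ i * N))
        = (∑ i ∈ Finset.range n, f (i+1) * N ^ i) * N := by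
      intro f; rw [Finset.sum_mul]; exact Finset.sum_congr rfl fun _ _ => by ring
    rw [hA f, hA g] at hsum
    set A := ∑ i ∈ Finset.range n, f (i+1) * N ^ i with hAdef
    set B := ∑ i ∈ Finset.range n, g (i+1) * N ^ i with hBdef
    have hf0 : f 0 = g 0 := by
      have := congrArg (· % N) hsum
      simpa [Nat.add_comm _ (f 0), Nat.add_comm _ (g 0), Nat.add_mul_mod_self_right,
        Nat.mod_eq_of_lt (hf 0 (Nat.succ_pos n)),
        Nat.mod_eq_of_lt (hg 0 (Nat.succ_pos n))] using this
    have hAB : A = B := by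
      have : A * N = B * N := by omega
      exact Nat.eq_of_mul_eq_mul_right hN this
    rcases Nat.eq_zero_or_pos i with rfl | hpos
    · exact hf0
    · obtain ⟨j, rfl⟩ := Nat.exists_eq_add_of_lt hpos
      simp only [Nat.zero_add] at *
      exact ih (fun k => f (k+1)) (fun k => g (k+1))
        (fun k hk => hf (k+1) (by omega)) (fun k hk => hg (k+1) (by omega)) hAB j (by omega)

open Polynomial in
lemma one_var (q : ℂ[X]) (hq : q ≠ 0) (h : ∀ s : ℂ, s ≠ 0 → q.eval s ≠ 0) :
    ∃ (c : ℂ) (m : ℕ), c ≠ 0 ∧ q = Polynomial.C c * Polynomial.X ^ m := by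
  have hsplit : q.Splits := IsAlgClosed.splits q
  have hcard : Multiset.card q.roots = q.natDegree := (Polynomial.splits_iff_card_roots).mp hsplit
  have hroots : q.roots = Multiset.replicate q.natDegree (0 : ℂ) := by
    rw [Multiset.eq_replicate]
    refine ⟨hcard, fun a ha => ?_⟩
    by_contra ha0
    exact h a ha0 ((Polynomial.mem_roots hq).mp ha)
  refine ⟨q.leadingCoeff, q.natDegree, Polynomial.leadingCoeff_ne_zero.mpr hq, ?_⟩
  have := Polynomial.C_leadingCoeff_mul_prod_multiset_X_sub_C (p := q) hcard
  rw [hroots] at this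
  simpa [Multiset.map_replicate, Multiset.prod_replicate] using this.symm

theorem stmt_0 (n : ℕ) (hn : 1 ≤ n) (p : MvPolynomial (Fin n) ℂ)
    (h : ∀ t : Fin n → ℂ, (∀ i, t i ≠ 0) → MvPolynomial.eval t p ≠ 0) :
    ∃ (c : ℂ) (m : Fin n → ℕ), c ≠ 0 ∧
      p = MvPolynomial.C c * ∏ i, MvPolynomial.X i ^ m i := by
  classical
  set N : ℕ := p.totalDegree + 1 with hN
  have hbound : ∀ d ∈ p.support, ∀ i : Fin n, d i < N := by
    intro d hd i
    have h1 : d i ≤ p.totalDegree := by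
      refine le_trans ?_ (MvPolynomial.le_totalDegree hd)
      rcases Nat.eq_zero_or_pos (d i) with h0 | h0
      · simp [h0]
      · have hmem : i ∈ d.support := Finsupp.mem_support_iff.mpr (by omega)
        rw [Finsupp.sum]
        exact Finset.single_le_sum (f := fun a => d a) (fun _ _ => Nat.zero_le _) hmem
    omega
  -- the weight function
  set φ : (Fin n →₀ ℕ) → ℕ := fun d => ∑ i : Fin n, d i * N ^ (i : ℕ) with hφ
  -- injectivity on support
  have hinj : ∀ d ∈ p.support, ∀ e ∈ p.support, φ d = φ e → d = e := by
    intro d hd e he hde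
    have hd' : ∀ k : ℕ, ∀ hk : k < n, True := fun _ _ => trivial
    set fd : ℕ → ℕ := fun k => if hk : k < n then d ⟨k, hk⟩ else 0 with hfd
    set fe : ℕ → ℕ := fun k => if hk : k < n then e ⟨k, hk⟩ else 0 with hfe
    have hconv : ∀ (d : Fin n →₀ ℕ) (fd : ℕ → ℕ),
        (fd = fun k => if hk : k < n then d ⟨k, hk⟩ else 0) →
        φ d = ∑ k ∈ Finset.range n, fd k * N ^ k := by
      intro d fd hfd
      rw [hφ, ← Fin.sum_univ_eq_sum_range (fun k => fd k * N ^ k) n]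
      refine Finset.sum_congr rfl fun i _ => ?_
      simp [hfd, i.isLt]
    rw [hconv d fd hfd, hconv e fe hfe] at hde
    have := base_inj N n fd fe
      (fun k hk => by simp only [hfd, dif_pos hk]; exact hbound d hd _)
      (fun k hk => by simp only [hfe, dif_pos hk]; exact hbound e he _) hde
    ext i
    have := this i i.isLt
    simpa [hfd, hfe, i.isLt] using this
  -- evaluation along the curve s ↦ (s^{N^i})
  have heval : ∀ s : ℂ, MvPolynomial.eval (fun i : Fin n => s ^ N ^ (i : ℕ)) p
      = ∑ d ∈ p.support, p.coeff d * s ^ φ d := by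
    intro s
    rw [MvPolynomial.eval_eq']
    refine Finset.sum_congr rfl fun d _ => ?_
    congr 1
    rw [hφ, ← Finset.prod_pow_eq_pow_sum]
    exact Finset.prod_congr rfl fun i _ => by rw [← pow_mul, mul_comm]
  set q : Polynomial ℂ := ∑ d ∈ p.support, Polynomial.C (p.coeff d) * Polynomial.X ^ φ d with hq
  have hqeval : ∀ s : ℂ, q.eval s = ∑ d ∈ p.support, p.coeff d * s ^ φ d := by
    intro s; rw [hq, Polynomial.eval_finset_sum]; simp
  have hq1 : q.eval 1 ≠ 0 := by
    rw [hqeval, ← heval]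
    simpa using h (fun _ => 1) (fun _ => one_ne_zero)
  have hq0 : q ≠ 0 := fun hq0 => hq1 (by simp [hq0])
  have hqroots : ∀ s : ℂ, s ≠ 0 → q.eval s ≠ 0 := by
    intro s hs
    rw [hqeval, ← heval]
    exact h _ fun i => pow_ne_zero _ hs
  obtain ⟨c, m, hc, hqcm⟩ := one_var q hq0 hqroots
  -- coefficient comparison
  have hcoeff : ∀ d ∈ p.support, q.coeff (φ d) = p.coeff d := by
    intro d hd
    rw [hq, Polynomial.finset_sum_coeff]
    rw [Finset.sum_eq_single d]
    · simp
    · intro e he hne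
      simp only [Polynomial.coeff_C_mul, Polynomial.coeff_X_pow]
      rw [if_neg fun hee => hne (hinj e he d hd hee.symm), mul_zero]
    · intro hd'; exact absurd hd hd'
  have hφm : ∀ d ∈ p.support, φ d = m := by
    intro d hd
    by_contra hne
    have h1 := hcoeff d hd
    rw [hqcm] at h1
    simp only [Polynomial.coeff_C_mul, Polynomial.coeff_X_pow, if_neg hne, mul_zero] at h1
    exact MvPolynomial.mem_support_iff.mp hd h1.symm
  -- support is a singleton
  have hp0 : p ≠ 0 := by
    intro h0
    exact h (fun _ => 1) (fun _ => one_ne_zero) (by simp [h0])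
  obtain ⟨d0, hd0⟩ := MvPolynomial.support_nonempty.mpr hp0
  have hsupp : p.support = {d0} := by
    refine Finset.eq_singleton_iff_unique_mem.mpr ⟨hd0, fun d hd => ?_⟩
    exact hinj d hd d0 hd0 ((hφm d hd).trans (hφm d0 hd0).symm)
  refine ⟨p.coeff d0, fun i => d0 i, MvPolynomial.mem_support_iff.mp hd0, ?_⟩
  conv_lhs => rw [MvPolynomial.as_sum p, hsupp, Finset.sum_singleton]
  rw [MvPolynomial.monomial_eq]
  congr 1
  exact Finsupp.prod_fintype _ _ fun i => pow_zero _
end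

section
/- If r ∈ Λₙ satisfies ev_t(r) ≠ 0 for every t ∈ (ℂˣ)ⁿ, then r is a unit of Λₙ of the form r = c·x^m, i.e., there exist c ∈ ℂˣ and m ∈ ℤⁿ such that r equals c times the basis monomial x^m = x₁^{m₁}⋯xₙ^{mₙ}. -/
open scoped BigOperators

/-- The `ℂ`-algebra homomorphism `ev t : ℂ[x₁^{±1},…,xₙ^{±1}] → ℂ` evaluating a Laurent
polynomial at the point `t ∈ (ℂˣ)ⁿ`; it sends the basis monomial `x^a` to `∏ j, t j ^ a j`. -/
noncomputable def ev (n : ℕ) (t : Fin n → ℂˣ) :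
    AddMonoidAlgebra ℂ (Fin n → ℤ) →ₐ[ℂ] ℂ :=
  AddMonoidAlgebra.lift ℂ ℂ (Fin n → ℤ) <|
    (Units.coeHom ℂ).comp
      { toFun := fun a => ∏ j, (t j) ^ (Multiplicative.toAdd a j)
        map_one' := by simp
        map_mul' := fun a b => by
          simp [toAdd_mul, Pi.add_apply, zpow_add, Finset.prod_mul_distrib] }

section Aux


-- coefficient at max+max
lemma key_max {A : Type*} [AddCommGroup A] [LinearOrder A] [IsOrderedAddMonoid A]
    (p q : AddMonoidAlgebra ℂ A) {ap aq : A}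
    (hp : ∀ a ∈ p.coeff.support, a ≤ ap) (hq : ∀ a ∈ q.coeff.support, a ≤ aq) :
    (p * q).coeff (ap + aq) = p.coeff ap * q.coeff aq := by
  classical
  rw [AddMonoidAlgebra.mul_apply]
  unfold Finsupp.sum
  rw [Finset.sum_eq_single ap]
  · dsimp only
    rw [Finset.sum_eq_single aq]
    · simp
    · intro b hb hne
      rw [if_neg]
      intro he
      have : ap + b < ap + aq := add_lt_add_of_le_of_lt le_rfl ((hq b hb).lt_of_ne hne)
      exact this.ne he
    · intro h
      rw [Finsupp.notMem_support_iff.1 h]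
      simp
  · intro a ha hne
    refine Finset.sum_eq_zero fun b hb => if_neg fun he => ?_
    have : a + b < ap + aq :=
      add_lt_add_of_lt_of_le ((hp a ha).lt_of_ne hne) (hq b hb)
    exact this.ne he
  · intro h
    refine Finset.sum_eq_zero fun b _ => ?_
    rw [Finsupp.notMem_support_iff.1 h]
    simp

lemma key_min {A : Type*} [AddCommGroup A] [LinearOrder A] [IsOrderedAddMonoid A]
    (p q : AddMonoidAlgebra ℂ A) {ap aq : A}
    (hp : ∀ a ∈ p.coeff.support, ap ≤ a) (hq : ∀ a ∈ q.coeff.support, aq ≤ a) :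
    (p * q).coeff (ap + aq) = p.coeff ap * q.coeff aq := by
  classical
  rw [AddMonoidAlgebra.mul_apply]
  unfold Finsupp.sum
  rw [Finset.sum_eq_single ap]
  · dsimp only
    rw [Finset.sum_eq_single aq]
    · simp
    · intro b hb hne
      rw [if_neg]
      intro he
      have : ap + aq < ap + b := add_lt_add_of_le_of_lt le_rfl ((hq b hb).lt_of_ne (Ne.symm hne))
      exact this.ne' he
    · intro h
      rw [Finsupp.notMem_support_iff.1 h]
      simp
  · intro a ha hne
    refine Finset.sum_eq_zero fun b hb => if_neg fun he => ?_
    have : ap + aq < a + b :=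
      add_lt_add_of_lt_of_le ((hp a ha).lt_of_ne (Ne.symm hne)) (hq b hb)
    exact this.ne' he
  · intro h
    refine Finset.sum_eq_zero fun b _ => ?_
    rw [Finsupp.notMem_support_iff.1 h]
    simp

lemma trivial_unit {A : Type*} [AddCommGroup A] [LinearOrder A] [IsOrderedAddMonoid A]
    (r s : AddMonoidAlgebra ℂ A) (hrs : r * s = 1) :
    ∃ (c : ℂˣ) (m : A), r = (c : ℂ) • AddMonoidAlgebra.single m (1 : ℂ) := by
  classical
  have hr : r ≠ 0 := by rintro rfl; simp at hrs
  have hs : s ≠ 0 := by rintro rfl; simp at hrs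
  have hrsupp : r.coeff.support.Nonempty := Finsupp.support_nonempty_iff.2 (mt AddMonoidAlgebra.coeff_eq_zero.1 hr)
  have hssupp : s.coeff.support.Nonempty := Finsupp.support_nonempty_iff.2 (mt AddMonoidAlgebra.coeff_eq_zero.1 hs)
  set Mr := r.coeff.support.max' hrsupp with hMr
  set Ms := s.coeff.support.max' hssupp with hMs
  set mr := r.coeff.support.min' hrsupp with hmr
  set ms := s.coeff.support.min' hssupp with hms
  have h1 : (r * s).coeff (Mr + Ms) = r.coeff Mr * s.coeff Ms :=
    key_max r s (fun a ha => Finset.le_max' _ a ha) (fun a ha => Finset.le_max' _ a ha)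
  have h2 : (r * s).coeff (mr + ms) = r.coeff mr * s.coeff ms :=
    key_min r s (fun a ha => Finset.min'_le _ a ha) (fun a ha => Finset.min'_le _ a ha)
  have hrM : r.coeff Mr ≠ 0 := Finsupp.mem_support_iff.1 (r.coeff.support.max'_mem hrsupp)
  have hsM : s.coeff Ms ≠ 0 := Finsupp.mem_support_iff.1 (s.coeff.support.max'_mem hssupp)
  have hrm : r.coeff mr ≠ 0 := Finsupp.mem_support_iff.1 (r.coeff.support.min'_mem hrsupp)
  have hsm : s.coeff ms ≠ 0 := Finsupp.mem_support_iff.1 (s.coeff.support.min'_mem hssupp)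
  have hone : (1 : AddMonoidAlgebra ℂ A) = AddMonoidAlgebra.single 0 1 := rfl
  have hMsum : Mr + Ms = 0 := by
    by_contra hne
    rw [hrs, hone, AddMonoidAlgebra.coeff_single, Finsupp.single_apply, if_neg (fun h => hne h.symm)] at h1
    exact mul_ne_zero hrM hsM h1.symm
  have hmsum : mr + ms = 0 := by
    by_contra hne
    rw [hrs, hone, AddMonoidAlgebra.coeff_single, Finsupp.single_apply, if_neg (fun h => hne h.symm)] at h2
    exact mul_ne_zero hrm hsm h2.symm
  have hle1 : mr ≤ Mr := Finset.min'_le _ _ (r.coeff.support.max'_mem hrsupp)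
  have hle2 : ms ≤ Ms := Finset.min'_le _ _ (s.coeff.support.max'_mem hssupp)
  have heq : mr = Mr := by
    by_contra hne
    have : mr + ms < Mr + Ms := add_lt_add_of_lt_of_le (hle1.lt_of_ne hne) hle2
    rw [hmsum, hMsum] at this
    exact lt_irrefl _ this
  have hsupp : r.coeff.support ⊆ {Mr} := by
    intro a ha
    have h1 : a ≤ Mr := Finset.le_max' _ a ha
    have h2 : Mr ≤ a := heq ▸ Finset.min'_le _ a ha
    simp [le_antisymm h1 h2]
  refine ⟨Units.mk0 (r.coeff Mr) hrM, Mr, ?_⟩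
  have : r = AddMonoidAlgebra.single Mr (r.coeff Mr) :=
    AddMonoidAlgebra.coeff_injective (by
      rw [AddMonoidAlgebra.coeff_single]; exact Finsupp.eq_single_iff.2 ⟨hsupp, rfl⟩)
  simp only [Units.val_mk0, AddMonoidAlgebra.smul_single', mul_one]
  exact this

lemma ev_single (n : ℕ) (t : Fin n → ℂˣ) (a : Fin n → ℤ) (b : ℂ) :
    ev n t (AddMonoidAlgebra.single a b) = b * ((∏ j, t j ^ a j : ℂˣ) : ℂ) := by
  rw [ev, AddMonoidAlgebra.lift_single]
  rfl

noncomputable def gens (n : ℕ) : Fin n ⊕ Fin n → AddMonoidAlgebra ℂ (Fin n → ℤ) :=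
  Sum.elim (fun i => AddMonoidAlgebra.single (Pi.single i 1) 1)
           (fun i => AddMonoidAlgebra.single (Pi.single i (-1)) 1)

noncomputable def phi (n : ℕ) :
    MvPolynomial (Fin n ⊕ Fin n) ℂ →ₐ[ℂ] AddMonoidAlgebra ℂ (Fin n → ℤ) :=
  MvPolynomial.aeval (gens n)

lemma single_single_mem (n : ℕ) (i : Fin n) (k : ℤ) :
    AddMonoidAlgebra.single (Pi.single i k) (1 : ℂ) ∈ (phi n).range := by
  cases k with
  | ofNat m =>
    have h : AddMonoidAlgebra.single (Pi.single i (m : ℤ)) (1 : ℂ)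
        = (AddMonoidAlgebra.single (Pi.single i 1 : Fin n → ℤ) (1:ℂ)) ^ m := by
      rw [AddMonoidAlgebra.single_pow, one_pow]
      congr 1
      ext j
      simp [Pi.single_apply]
    rw [Int.ofNat_eq_coe, h]
    have hx : AddMonoidAlgebra.single (Pi.single i 1 : Fin n → ℤ) (1:ℂ) ∈ (phi n).range :=
      ⟨MvPolynomial.X (Sum.inl i), MvPolynomial.aeval_X _ _⟩
    exact pow_mem hx m
  | negSucc m =>
    have h : AddMonoidAlgebra.single (Pi.single i (Int.negSucc m)) (1 : ℂ)
        = (AddMonoidAlgebra.single (Pi.single i (-1) : Fin n → ℤ) (1:ℂ)) ^ (m + 1) := by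
      rw [AddMonoidAlgebra.single_pow, one_pow]
      congr 1
      ext j
      simp [Pi.single_apply, Int.negSucc_eq]
    rw [h]
    have hx : AddMonoidAlgebra.single (Pi.single i (-1) : Fin n → ℤ) (1:ℂ) ∈ (phi n).range :=
      ⟨MvPolynomial.X (Sum.inr i), MvPolynomial.aeval_X _ _⟩
    exact pow_mem hx (m + 1)

lemma single_mem (n : ℕ) (a : Fin n → ℤ) :
    AddMonoidAlgebra.single a (1 : ℂ) ∈ (phi n).range := by
  have h : AddMonoidAlgebra.single a (1 : ℂ)
      = ∏ i, AddMonoidAlgebra.single (Pi.single i (a i)) (1 : ℂ) := by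
    rw [AddMonoidAlgebra.prod_single, Finset.prod_const_one]
    congr 1
    exact (Finset.univ_sum_single a).symm
  rw [h]
  exact prod_mem fun i _ => single_single_mem n i (a i)

lemma phi_surjective (n : ℕ) : Function.Surjective (phi n) := by
  rw [← AlgHom.range_eq_top]
  rw [eq_top_iff]
  rintro r -
  induction r using AddMonoidAlgebra.induction with
  | zero => exact zero_mem _
  | single_add a b f _ _ ih =>
    refine add_mem ?_ ih
    have : AddMonoidAlgebra.single a b = b • AddMonoidAlgebra.single a (1:ℂ) := by
      rw [AddMonoidAlgebra.smul_single', mul_one]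
    rw [this]
    exact Subalgebra.smul_mem _ (single_mem n a) b

lemma isUnit_of_ev_ne_zero (n : ℕ) (r : AddMonoidAlgebra ℂ (Fin n → ℤ))
    (h : ∀ t : Fin n → ℂˣ, ev n t r ≠ 0) : IsUnit r := by
  by_contra hnu
  have hne : Ideal.span {r} ≠ ⊤ := fun ht => hnu (Ideal.span_singleton_eq_top.mp ht)
  obtain ⟨M, hMmax, hle⟩ := Ideal.exists_le_maximal _ hne
  have hrM : r ∈ M := hle (Ideal.subset_span rfl)
  let I : Ideal (MvPolynomial (Fin n ⊕ Fin n) ℂ) := Ideal.comap (phi n) M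
  haveI hImax : I.IsMaximal := Ideal.comap_isMaximal_of_surjective _ (phi_surjective n)
  obtain ⟨x, hx⟩ := MvPolynomial.isMaximal_iff_eq_vanishingIdeal_singleton.mp hImax
  have hrel : ∀ i : Fin n, x (Sum.inl i) * x (Sum.inr i) = 1 := by
    intro i
    have phi_X : ∀ j, phi n (MvPolynomial.X j) = gens n j := fun j => MvPolynomial.aeval_X _ j
    have hker : phi n (MvPolynomial.X (Sum.inl i) * MvPolynomial.X (Sum.inr i) - 1) = 0 := by
      rw [map_sub, map_mul, map_one, phi_X, phi_X]
      show (AddMonoidAlgebra.single (Pi.single i 1 : Fin n → ℤ) (1:ℂ)) *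
        (AddMonoidAlgebra.single (Pi.single i (-1) : Fin n → ℤ) (1:ℂ)) - 1 = 0
      rw [AddMonoidAlgebra.single_mul_single, mul_one]
      have : (Pi.single i 1 : Fin n → ℤ) + Pi.single i (-1) = 0 := by
        ext j; simp only [Pi.add_apply, Pi.single_apply, Pi.zero_apply]; split <;> simp
      rw [this, sub_eq_zero]
      rfl
    have hmem : (MvPolynomial.X (Sum.inl i) * MvPolynomial.X (Sum.inr i) - 1 :
        MvPolynomial (Fin n ⊕ Fin n) ℂ) ∈ I := by
      show phi n _ ∈ M
      rw [hker]
      exact M.zero_mem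
    rw [hx, MvPolynomial.mem_vanishingIdeal_singleton_iff, map_sub, map_mul, map_one,
      MvPolynomial.aeval_X, MvPolynomial.aeval_X, sub_eq_zero] at hmem
    exact hmem
  let t : Fin n → ℂˣ := fun i =>
    ⟨x (Sum.inl i), x (Sum.inr i), hrel i, by rw [mul_comm]; exact hrel i⟩
  have hcomp : (ev n t).comp (phi n) = MvPolynomial.aeval x := by
    apply MvPolynomial.algHom_ext
    intro j
    rw [MvPolynomial.aeval_X, AlgHom.comp_apply,
      show phi n (MvPolynomial.X j) = gens n j from MvPolynomial.aeval_X _ j]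
    cases j with
    | inl i =>
      show ev n t (AddMonoidAlgebra.single (Pi.single i 1 : Fin n → ℤ) 1) = x (Sum.inl i)
      rw [ev_single, one_mul]
      have : (∏ j, t j ^ (Pi.single i 1 : Fin n → ℤ) j) = t i := by
        rw [Finset.prod_eq_single i]
        · simp
        · intro b _ hb; simp [Pi.single_apply, hb]
        · simp
      rw [this]
    | inr i =>
      show ev n t (AddMonoidAlgebra.single (Pi.single i (-1) : Fin n → ℤ) 1) = x (Sum.inr i)
      rw [ev_single, one_mul]
      have : (∏ j, t j ^ (Pi.single i (-1) : Fin n → ℤ) j) = (t i)⁻¹ := by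
        rw [Finset.prod_eq_single i]
        · simp
        · intro b _ hb; simp [Pi.single_apply, hb]
        · simp
      rw [this]
      rfl
  obtain ⟨R, hR⟩ := phi_surjective n r
  have hRI : R ∈ I := by show phi n R ∈ M; rw [hR]; exact hrM
  have hzero : ev n t r = 0 := by
    rw [← hR, ← AlgHom.comp_apply, hcomp]
    have := (MvPolynomial.mem_vanishingIdeal_singleton_iff x R).mp (hx ▸ hRI)
    rw [show (MvPolynomial.aeval x : MvPolynomial (Fin n ⊕ Fin n) ℂ →ₐ[ℂ] ℂ) R
      = MvPolynomial.eval x R from rfl]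
    exact this
  exact h t hzero

noncomputable instance lexLOACG (n : ℕ) : IsOrderedAddMonoid (Lex (Fin n → ℤ)) :=
  inferInstance

noncomputable def lexEquiv (n : ℕ) : (Fin n → ℤ) ≃+ Lex (Fin n → ℤ) :=
  { toLex with map_add' := fun _ _ => rfl }

noncomputable def lexAlg (n : ℕ) :
    AddMonoidAlgebra ℂ (Fin n → ℤ) ≃ₐ[ℂ] AddMonoidAlgebra ℂ (Lex (Fin n → ℤ)) :=
  AddMonoidAlgebra.domCongr ℂ ℂ (lexEquiv n)


end Aux

theorem stmt_1 (n : ℕ) (r : AddMonoidAlgebra ℂ (Fin n → ℤ))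
    (h : ∀ t : Fin n → ℂˣ, ev n t r ≠ 0) :
    IsUnit r ∧ ∃ (c : ℂˣ) (m : Fin n → ℤ),
      r = (c : ℂ) • AddMonoidAlgebra.single m (1 : ℂ) := by
  have hu : IsUnit r := isUnit_of_ev_ne_zero n r h
  refine ⟨hu, ?_⟩
  obtain ⟨u, rfl⟩ := hu
  obtain ⟨c, m, hm⟩ := trivial_unit (lexAlg n u) (lexAlg n ↑u⁻¹)
    (by rw [← map_mul, u.mul_inv, map_one])
  refine ⟨c, ofLex m, ?_⟩
  have := congrArg (lexAlg n).symm hm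
  rw [AlgEquiv.symm_apply_apply] at this
  rw [this, map_smul]
  congr 1
  show (AddMonoidAlgebra.domCongr ℂ ℂ (lexEquiv n)).symm _ = _
  rw [AddMonoidAlgebra.domCongr_symm, AddMonoidAlgebra.domCongr_single]
  rfl
end

section
/- Let A be a k×k matrix over Λₙ such that for every t ∈ (ℂˣ)ⁿ the complex matrix ev_t(A) is invertible. Then A is invertible over Λₙ; that is, A is a unit of the ring of k×k matrices with entries in Λₙ (equivalently, the determinant of A is a unit of Λₙ). -/
open scoped BigOperators

namespace Stmt3Aux

/-- The additive monoid hom `(Fin n →₀ ℕ) →+ (Fin n → ℤ)`. -/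
noncomputable def coeHom (n : ℕ) : (Fin n →₀ ℕ) →+ (Fin n → ℤ) :=
  AddMonoidHom.mk' (fun ν j => (ν j : ℤ)) (by
    intro a b; funext j; simp)

/-- The inclusion of `ℂ[x₁,…,xₙ]` into the Laurent polynomial ring. -/
noncomputable def φ (n : ℕ) :
    MvPolynomial (Fin n) ℂ →ₐ[ℂ] AddMonoidAlgebra ℂ (Fin n → ℤ) :=
  AddMonoidAlgebra.mapDomainAlgHom ℂ ℂ (coeHom n)

lemma φ_single (n : ℕ) (ν : Fin n →₀ ℕ) (c : ℂ) :
    φ n (MvPolynomial.monomial ν c) = AddMonoidAlgebra.single (coeHom n ν) c := by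
  rw [← MvPolynomial.single_eq_monomial]
  exact AddMonoidAlgebra.mapDomain_single

lemma isUnit_single (n : ℕ) (a : Fin n → ℤ) :
    IsUnit (AddMonoidAlgebra.single a (1 : ℂ)) := by
  refine IsUnit.of_mul_eq_one (AddMonoidAlgebra.single (-a) 1) ?_
  rw [AddMonoidAlgebra.single_mul_single]
  simp [AddMonoidAlgebra.one_def]

lemma ev_single (n : ℕ) (t : Fin n → ℂˣ) (a : Fin n → ℤ) (c : ℂ) :
    ev n t (AddMonoidAlgebra.single a c) = c * ∏ j, ((t j : ℂ) ^ (a j)) := by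
  rw [ev, AddMonoidAlgebra.lift_single]
  simp [Units.coeHom, smul_eq_mul]

lemma ev_φ (n : ℕ) (t : Fin n → ℂˣ) (q : MvPolynomial (Fin n) ℂ) :
    ev n t (φ n q) = MvPolynomial.eval (fun j => (t j : ℂ)) q := by
  have h : (ev n t).comp (φ n) = MvPolynomial.aeval (fun j => (t j : ℂ)) := by
    apply MvPolynomial.algHom_ext
    intro i
    rw [AlgHom.comp_apply, MvPolynomial.aeval_X]
    rw [show (MvPolynomial.X i : MvPolynomial (Fin n) ℂ)
        = MvPolynomial.monomial (Finsupp.single i 1) 1 from rfl, φ_single, ev_single]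
    simp [coeHom, Finsupp.single_apply, apply_ite]
  have h2 : ev n t (φ n q) = MvPolynomial.aeval (fun j => (t j : ℂ)) q :=
    congrArg (fun f => f q) h
  rw [h2, ← MvPolynomial.coe_aeval_eq_eval]
  rfl

lemma key (n : ℕ) (p : AddMonoidAlgebra ℂ (Fin n → ℤ))
    (h : ∀ t : Fin n → ℂˣ, ev n t p ≠ 0) : IsUnit p := by
  classical
  set S : Finset (Fin n → ℤ) := p.coeff.support with hS
  set M : Fin n → ℤ := fun j => ((S.sup fun b => (-(b j)).toNat : ℕ) : ℤ) with hM
  have hMnn : ∀ a ∈ S, ∀ j, 0 ≤ M j + a j := by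
    intro a ha j
    have h1 : (-(a j)).toNat ≤ S.sup fun b => (-(b j)).toNat :=
      Finset.le_sup (f := fun b => (-(b j)).toNat) ha
    have h2 : -(a j) ≤ ((-(a j)).toNat : ℤ) := Int.self_le_toNat _
    have h3 : ((-(a j)).toNat : ℤ) ≤ M j := by
      show ((-(a j)).toNat : ℤ) ≤ ((S.sup fun b => (-(b j)).toNat : ℕ) : ℤ)
      exact_mod_cast h1
    have h4 : -(a j) ≤ M j := h2.trans h3
    linarith
  set ν : (Fin n → ℤ) → (Fin n →₀ ℕ) := fun a =>
    Finsupp.equivFunOnFinite.symm fun j => (M j + a j).toNat with hν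
  have hνcoe : ∀ a ∈ S, coeHom n (ν a) = M + a := by
    intro a ha; funext j
    simp only [coeHom, AddMonoidHom.mk'_apply, hν, Finsupp.coe_equivFunOnFinite_symm,
      Pi.add_apply]
    exact Int.toNat_of_nonneg (hMnn a ha j)
  set P : MvPolynomial (Fin n) ℂ := ∑ a ∈ S, MvPolynomial.monomial (ν a) (p.coeff a) with hP
  have hφP : φ n P = AddMonoidAlgebra.single M 1 * p := by
    have hp : p = ∑ a ∈ S, AddMonoidAlgebra.single a (p.coeff a) :=
      (AddMonoidAlgebra.sum_coeff_single p).symm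
    rw [hP, map_sum]
    conv_rhs => rw [hp]
    rw [Finset.mul_sum]
    refine Finset.sum_congr rfl fun a ha => ?_
    rw [φ_single, hνcoe a ha, AddMonoidAlgebra.single_mul_single, one_mul]
  -- nonvanishing of P off the coordinate hyperplanes
  have hzero : ∀ x ∈ MvPolynomial.zeroLocus ℂ (Ideal.span {P}), ∃ j, x j = 0 := by
    intro x hx
    by_contra hc
    push_neg at hc
    set t : Fin n → ℂˣ := fun j => Units.mk0 (x j) (hc j) with ht
    have hxP : MvPolynomial.eval x P = 0 :=
      MvPolynomial.mem_zeroLocus_iff.mp hx P (Ideal.subset_span rfl)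
    have : ev n t (φ n P) = 0 := by
      rw [ev_φ]
      convert hxP
      simp [ht]
    rw [hφP, map_mul, ev_single] at this
    rcases mul_eq_zero.mp this with h1 | h1
    · rcases mul_eq_zero.mp h1 with h2 | h2
      · exact one_ne_zero h2
      · exact (Units.ne_zero (∏ j, (t j) ^ (M j))) (by push_cast at h2 ⊢; simpa using h2)
    · exact h t h1
  have hXmem : (∏ j, MvPolynomial.X j : MvPolynomial (Fin n) ℂ) ∈
      (Ideal.span {P}).radical := by
    rw [← MvPolynomial.vanishingIdeal_zeroLocus_eq_radical (K := ℂ)]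
    rw [MvPolynomial.mem_vanishingIdeal_iff]
    intro x hx
    obtain ⟨j, hj⟩ := hzero x hx
    rw [map_prod]
    exact Finset.prod_eq_zero (Finset.mem_univ j) (by simp [hj])
  obtain ⟨m, hm⟩ := hXmem
  obtain ⟨R, hR⟩ := Ideal.mem_span_singleton'.mp hm
  have hunit : IsUnit (φ n ((∏ j, MvPolynomial.X j : MvPolynomial (Fin n) ℂ) ^ m)) := by
    rw [map_pow, map_prod]
    refine IsUnit.pow m (Finset.univ.prod_induction _ IsUnit (fun _ _ => IsUnit.mul)
      isUnit_one fun j _ => ?_)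
    rw [MvPolynomial.X, φ_single]
    exact isUnit_single n _
  rw [← hR, map_mul, hφP] at hunit
  have h1 : IsUnit (AddMonoidAlgebra.single M (1:ℂ) * p) :=
    isUnit_of_mul_isUnit_right hunit
  rw [mul_comm] at h1
  exact isUnit_of_mul_isUnit_left h1

end Stmt3Aux

theorem stmt_3 (n k : ℕ) (A : Matrix (Fin k) (Fin k) (AddMonoidAlgebra ℂ (Fin n → ℤ)))
    (hinv : ∀ t : Fin n → ℂˣ, IsUnit (A.map (ev n t))) :
    IsUnit A := by
  rw [Matrix.isUnit_iff_isUnit_det]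
  apply Stmt3Aux.key
  intro t
  have h := (Matrix.isUnit_iff_isUnit_det _).mp (hinv t)
  rw [isUnit_iff_ne_zero] at h
  rw [(ev n t).map_det]
  simpa [RingHom.mapMatrix_apply] using h
end

section
/- For every invertible k×k complex matrix X there exists a k×k complex matrix Y such that X = exp(−2πi·Y), where exp denotes the matrix exponential and i is the imaginary unit. In particular, the matrix exponential exp : Mat_k(ℂ) → Mat_k(ℂ) maps onto the group of invertible matrices. -/
set_option maxHeartbeats 1000000
set_option synthInstance.maxHeartbeats 400000

open NormedSpace Set Filter

/-- The range of the exponential in a complex Banach algebra is a neighborhood of 1. -/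
lemma aux_exp_range_mem_nhds_one {B : Type*} [NormedRing B] [NormedAlgebra ℂ B]
    [CompleteSpace B] : Set.range (NormedSpace.exp : B → B) ∈ nhds (1 : B) := by
  have hd : HasStrictFDerivAt (NormedSpace.exp)
      ((ContinuousLinearEquiv.refl ℂ B : B →L[ℂ] B)) 0 := by
    exact (hasStrictFDerivAt_exp_zero (𝕂 := ℂ) (𝔸 := B))
  have h := hd.map_nhds_eq_of_equiv
  rw [NormedSpace.exp_zero] at h
  rw [← h]
  exact Filter.range_mem_map

/-- In a commutative complex Banach algebra, a point connected to a point of the range of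
`exp` by a continuous path through units lies in the range of `exp`. -/
lemma aux_exp_mem_of_unit_path {B : Type*} [NormedCommRing B] [NormedAlgebra ℂ B]
    [CompleteSpace B] (γ : ℝ → B) (hγ : Continuous γ) (hu : ∀ t, ∃ d, γ t * d = 1)
    (h0 : ∃ t₀, γ t₀ ∈ Set.range (NormedSpace.exp)) (t : ℝ) :
    γ t ∈ Set.range (NormedSpace.exp) := by
  letI : NormedAlgebra ℚ B := NormedAlgebra.restrictScalars ℚ ℂ B
  set E := Set.range (NormedSpace.exp : B → B) with hE
  have hE1 : E ∈ nhds (1 : B) := aux_exp_range_mem_nhds_one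
  set T := {s : ℝ | γ s ∈ E} with hT
  have hnhds : ∀ s : ℝ, (fun r => γ r * Classical.choose (hu s)) ⁻¹' E ∈ nhds s := by
    intro s
    apply ContinuousAt.preimage_mem_nhds ((hγ.mul continuous_const).continuousAt)
    show E ∈ nhds (γ s * Classical.choose (hu s))
    rw [Classical.choose_spec (hu s)]
    exact hE1
  have hopen : IsOpen T := by
    rw [isOpen_iff_mem_nhds]
    rintro s ⟨a, ha⟩
    refine Filter.mem_of_superset (hnhds s) ?_
    rintro r ⟨b, hb⟩
    have hd : γ s * Classical.choose (hu s) = 1 := Classical.choose_spec (hu s)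
    refine ⟨b + a, ?_⟩
    calc NormedSpace.exp (b + a) = (γ r * Classical.choose (hu s)) * γ s := by
          rw [NormedSpace.exp_add, ha, hb]
      _ = γ r * (γ s * Classical.choose (hu s)) := by ring
      _ = γ r := by rw [hd, mul_one]
  have hclosed : IsClosed T := by
    apply isClosed_of_closure_subset
    intro s hs
    obtain ⟨r, hrN, hrT⟩ := mem_closure_iff_nhds.mp hs _ (hnhds s)
    obtain ⟨b, hb⟩ := hrN
    obtain ⟨a, ha⟩ := hrT
    have hd : γ s * Classical.choose (hu s) = 1 := Classical.choose_spec (hu s)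
    have h1 : NormedSpace.exp b * γ s = γ r := by
      calc NormedSpace.exp b * γ s = (γ r * Classical.choose (hu s)) * γ s := by rw [hb]
        _ = γ r * (γ s * Classical.choose (hu s)) := by ring
        _ = γ r := by rw [hd, mul_one]
    refine ⟨-b + a, ?_⟩
    calc NormedSpace.exp (-b + a)
        = NormedSpace.exp (-b) * NormedSpace.exp a := NormedSpace.exp_add
      _ = NormedSpace.exp (-b) * (NormedSpace.exp b * γ s) := by rw [ha, h1]
      _ = (NormedSpace.exp (-b) * NormedSpace.exp b) * γ s := by ring
      _ = γ s := by rw [← NormedSpace.exp_add, neg_add_cancel, NormedSpace.exp_zero, one_mul]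
  have : T = Set.univ := IsClopen.eq_univ ⟨hclosed, hopen⟩ h0
  exact (this ▸ Set.mem_univ t : t ∈ T)

/-- A direction `c = 1 + t i` avoiding all real multiples of spectral values exists. -/
lemma aux_choose_c {k : ℕ} (X : Matrix (Fin k) (Fin k) ℂ) :
    ∃ t : ℝ, ∀ lam ∈ spectrum ℂ X, ∀ s : ℝ,
      (1 + (t : ℂ) * Complex.I) ≠ (s : ℂ) * lam := by
  have hfin : Set.Finite {t : ℝ | ∃ lam ∈ spectrum ℂ X, ∃ s : ℝ,
      (1 + (t : ℂ) * Complex.I) = (s : ℂ) * lam} := by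
    have hsub : {t : ℝ | ∃ lam ∈ spectrum ℂ X, ∃ s : ℝ,
        (1 + (t : ℂ) * Complex.I) = (s : ℂ) * lam} ⊆
        ⋃ lam ∈ spectrum ℂ X,
          {t : ℝ | ∃ s : ℝ, (1 + (t : ℂ) * Complex.I) = (s : ℂ) * lam} := by
      rintro t ⟨lam, hlam, s, hs⟩
      exact Set.mem_biUnion hlam ⟨s, hs⟩
    refine Set.Finite.subset (Set.Finite.biUnion (Matrix.finite_spectrum X) ?_) hsub
    intro lam _
    apply Set.Subsingleton.finite
    rintro t1 ⟨s1, hs1⟩ t2 ⟨s2, hs2⟩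
    have hs1' : s1 ≠ 0 := by
      rintro rfl
      simp [Complex.ext_iff] at hs1
    have key : (s1 : ℂ) * (1 + (t2 : ℂ) * Complex.I)
        = (s2 : ℂ) * (1 + (t1 : ℂ) * Complex.I) := by
      rw [hs2, hs1]; ring
    have h1 := congrArg Complex.re key
    have h2 := congrArg Complex.im key
    simp only [Complex.mul_re, Complex.mul_im, Complex.add_re, Complex.add_im,
      Complex.one_re, Complex.one_im, Complex.mul_I_re, Complex.mul_I_im,
      Complex.ofReal_re, Complex.ofReal_im, Complex.I_re, Complex.I_im] at h1 h2
    have hs12 : s1 = s2 := by linarith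
    rw [← hs12] at h2
    have ht : t1 = t2 := by
      have := mul_left_cancel₀ hs1' (by linarith : s1 * t1 = s1 * t2)
      exact this
    exact ht.symm ▸ rfl
  obtain ⟨t, ht⟩ := hfin.infinite_compl.nonempty
  exact ⟨t, fun lam hlam s hs => ht ⟨lam, hlam, s, hs⟩⟩

lemma aux_exp_surjective {k : ℕ} (X : Matrix (Fin k) (Fin k) ℂ) (hX : IsUnit X) :
    ∃ Z : Matrix (Fin k) (Fin k) ℂ, NormedSpace.exp Z = X := by
  classical
  letI : SeminormedRing (Matrix (Fin k) (Fin k) ℂ) := Matrix.linftyOpSemiNormedRing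
  letI : NormedRing (Matrix (Fin k) (Fin k) ℂ) := Matrix.linftyOpNormedRing
  letI : NormedAlgebra ℂ (Matrix (Fin k) (Fin k) ℂ) := Matrix.linftyOpNormedAlgebra
  obtain ⟨tc, htc⟩ := aux_choose_c X
  set c : ℂ := 1 + (tc : ℂ) * Complex.I with hc
  have hc0 : c ≠ 0 := by
    intro h
    rw [Complex.ext_iff] at h
    simp [hc] at h
  -- the commutative Banach algebra generated by X
  set A := Algebra.adjoin ℂ ({X} : Set (Matrix (Fin k) (Fin k) ℂ)) with hA
  haveI : FiniteDimensional ℂ A :=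
    FiniteDimensional.of_injective (Subalgebra.val A).toLinearMap Subtype.val_injective
  -- elements of A that are invertible as matrices have (right) inverses in A
  have hunitA : ∀ a : A, IsUnit (a : Matrix (Fin k) (Fin k) ℂ) → ∃ d : A, a * d = 1 := by
    intro a ha
    have hinj : Function.Injective (LinearMap.mulLeft ℂ a) := by
      intro b1 b2 h
      simp only [LinearMap.mulLeft_apply] at h
      have h' := Subtype.ext_iff.mp h
      rw [MulMemClass.coe_mul, MulMemClass.coe_mul] at h'
      exact Subtype.ext (ha.mul_left_cancel h')
    obtain ⟨d, hd⟩ := (LinearMap.injective_iff_surjective.mp hinj) 1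
    exact ⟨d, hd⟩
  letI : NormedCommRing A :=
    { (inferInstance : NormedRing A) with
      mul_comm := fun a b => Subtype.ext
        ((Algebra.commute_of_mem_adjoin_of_forall_mem_commute (R := ℂ) b.2
          (fun z hz => by
            rw [Set.mem_singleton_iff] at hz
            subst hz
            exact (Algebra.commute_of_mem_adjoin_self a.2).symm)).eq) }
  haveI : IsUniformAddGroup A := A.toSubring.toAddSubgroup.isUniformAddGroup
  haveI : IsTopologicalRing A := A.toSubring.instIsTopologicalRing
  haveI : CompleteSpace A := FiniteDimensional.complete ℂ A
  set xA : A := ⟨X, Algebra.self_mem_adjoin_singleton ℂ X⟩ with hxA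
  -- the path
  set φ : ℝ → ℝ := fun t => max 0 (min t 1) with hφ
  have hφc : Continuous φ := continuous_const.max (continuous_id.min continuous_const)
  have hφ0 : ∀ t, 0 ≤ φ t := fun t => le_max_left 0 _
  have hφ1 : ∀ t, φ t ≤ 1 := fun t => max_le zero_le_one (min_le_right t 1)
  set γ : ℝ → A := fun t => (1 - (φ t : ℂ)) • xA + ((φ t : ℂ) * c) • (1 : A) with hγ
  have hγc : Continuous γ := by
    apply Continuous.add
    · exact (continuous_const.sub (Complex.continuous_ofReal.comp hφc)).smul continuous_const
    · exact ((Complex.continuous_ofReal.comp hφc).mul continuous_const).smul continuous_const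
  have hγcoe : ∀ t, ((γ t : Matrix (Fin k) (Fin k) ℂ))
      = (1 - (φ t : ℂ)) • X + ((φ t : ℂ) * c) • (1 : Matrix (Fin k) (Fin k) ℂ) := by
    intro t; simp [hγ, hxA]
  -- every point of the path is invertible as a matrix
  have hMunit : ∀ t, IsUnit ((γ t : Matrix (Fin k) (Fin k) ℂ)) := by
    intro t
    rw [hγcoe]
    rcases eq_or_ne (φ t) 0 with h0 | h0
    · simpa [h0] using hX
    rcases eq_or_ne (φ t) 1 with h1 | h1
    · have hz1 : ((1 : ℂ) - (φ t : ℂ)) = 0 := by rw [h1]; simp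
      rw [hz1, zero_smul, zero_add, h1]
      rw [Complex.ofReal_one, one_mul, Algebra.smul_def, mul_one]
      exact (isUnit_iff_ne_zero.mpr hc0).map (algebraMap ℂ (Matrix (Fin k) (Fin k) ℂ))
    · have hu0 : (0 : ℝ) < φ t := lt_of_le_of_ne (hφ0 t) (Ne.symm h0)
      have hu1 : φ t < 1 := lt_of_le_of_ne (hφ1 t) h1
      have huC : ((φ t : ℝ) : ℂ) ≠ 0 := by exact_mod_cast ne_of_gt hu0
      have h1u : (1 : ℂ) - (φ t : ℂ) ≠ 0 := by
        have h' : ((1 - φ t : ℝ) : ℂ) ≠ 0 := by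
          exact_mod_cast ne_of_gt (sub_pos.mpr hu1)
        simpa using h'
      have hu1' : ((φ t : ℝ) : ℂ) - 1 ≠ 0 := by
        intro h
        apply h1u
        have h2 := neg_eq_zero.mpr h
        rwa [neg_sub] at h2
      set z : ℂ := -((φ t : ℂ) * c) / (1 - (φ t : ℂ)) with hz
      have hznot : z ∉ spectrum ℂ X := by
        intro hzs
        refine htc z hzs (-(1 - φ t) / φ t) ?_
        rw [hz]
        push_cast
        field_simp
      have hzu : IsUnit (algebraMap ℂ (Matrix (Fin k) (Fin k) ℂ) z - X) :=
        spectrum.notMem_iff.mp hznot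
      have key : (1 - (φ t : ℂ)) • X + ((φ t : ℂ) * c) • (1 : Matrix (Fin k) (Fin k) ℂ)
          = ((φ t : ℂ) - 1) • (algebraMap ℂ (Matrix (Fin k) (Fin k) ℂ) z - X) := by
        rw [Algebra.algebraMap_eq_smul_one, smul_sub, smul_smul]
        have hz' : (((φ t : ℂ)) - 1) * z = (φ t : ℂ) * c := by
          rw [hz]; field_simp; ring
        rw [hz']
        module
      rw [key, Algebra.smul_def]
      exact ((isUnit_iff_ne_zero.mpr hu1').map
        (algebraMap ℂ (Matrix (Fin k) (Fin k) ℂ))).mul hzu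
  have hu : ∀ t, ∃ d : A, γ t * d = 1 := fun t => hunitA _ (hMunit t)
  -- endpoint at t = 1 is a scalar, hence an exponential
  have hφat1 : φ 1 = 1 := by simp [hφ]
  have hγ1 : γ 1 = c • (1 : A) := by
    rw [hγ]
    simp [hφat1]
  have h0 : ∃ t₀, γ t₀ ∈ Set.range (NormedSpace.exp : A → A) := by
    refine ⟨1, ⟨(Complex.log c) • (1 : A), ?_⟩⟩
    rw [hγ1, Algebra.smul_def, mul_one, Algebra.smul_def, mul_one]
    have hcomm := NormedSpace.algebraMap_exp_comm (𝕂 := ℂ) (𝔸 := A) (Complex.log c)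
    rw [← Complex.exp_eq_exp_ℂ, Complex.exp_log hc0] at hcomm
    exact hcomm.symm
  obtain ⟨a, ha⟩ := aux_exp_mem_of_unit_path γ hγc hu h0 0
  have hφat0 : φ 0 = 0 := by simp [hφ]
  have hγ0 : γ 0 = xA := by
    rw [hγ]
    simp [hφat0]
  refine ⟨(a : Matrix (Fin k) (Fin k) ℂ), ?_⟩
  letI : NormedAlgebra ℚ A := NormedAlgebra.restrictScalars ℚ ℂ A
  have hmap := NormedSpace.map_exp (Subalgebra.val A)
    (continuous_subtype_val : Continuous (Subtype.val : A → Matrix (Fin k) (Fin k) ℂ)) a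
  rw [ha, hγ0] at hmap
  exact hmap.symm

theorem stmt_5 (k : ℕ) (X : Matrix (Fin k) (Fin k) ℂ) (hX : IsUnit X) :
    ∃ Y : Matrix (Fin k) (Fin k) ℂ,
      X = NormedSpace.exp ((-(2 * (Real.pi : ℂ) * Complex.I)) • Y) := by
  obtain ⟨Z, hZ⟩ := aux_exp_surjective X hX
  have hne : (-(2 * (Real.pi : ℂ) * Complex.I)) ≠ 0 := by
    simp [Real.pi_ne_zero, Complex.I_ne_zero, Complex.ofReal_ne_zero]
  refine ⟨(-(2 * (Real.pi : ℂ) * Complex.I))⁻¹ • Z, ?_⟩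
  rw [smul_inv_smul₀ hne, hZ]
end

section
/- Let A be a k×k matrix with entries in the formal power series ring ℂ[[s]] whose constant-term matrix (the matrix of coefficients of s⁰) is the identity. Suppose that the characteristic polynomial of A over ℂ[[s]] factors as ∏_{i=1}^{k} (T − E_{c_i}), where c₁,…,c_k ∈ ℂ and E_c ∈ ℂ[[s]] denotes the exponential series Σ_{d≥0} (c^d/d!)·s^d. Let A₁ ∈ Mat_k(ℂ) be the matrix whose entries are the coefficients of s¹ in the corresponding entries of A. Then the characteristic polynomial of A₁ equals ∏_{i=1}^{k} (T − c_i); that is, the eigenvalues of A₁, counted with multiplicity, are exactly c₁,…,c_k. -/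
open Polynomial

private lemma stmt6_X_mul_shift {R : Type*} [Semiring R] (f : PowerSeries R)
    (h : PowerSeries.constantCoeff f = 0) :
    f = PowerSeries.X * PowerSeries.mk (fun d => PowerSeries.coeff (d + 1) f) := by
  ext n
  cases n with
  | zero =>
      simpa using h
  | succ n =>
      simp [PowerSeries.coeff_succ_X_mul]

private lemma stmt6_constantCoeff_map {R S : Type*} [Semiring R] [Semiring S] (f : R →+* S)
    (φ : PowerSeries R) :
    PowerSeries.constantCoeff (PowerSeries.map f φ) = f (PowerSeries.constantCoeff φ) := by
  rw [← PowerSeries.coeff_zero_eq_constantCoeff, PowerSeries.coeff_map,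
    PowerSeries.coeff_zero_eq_constantCoeff]

open Polynomial in
theorem stmt_6 (k : ℕ) (A : Matrix (Fin k) (Fin k) (PowerSeries ℂ)) (c : Fin k → ℂ)
    (h0 : A.map PowerSeries.constantCoeff = 1)
    (hchar : Matrix.charpoly A =
      ∏ i, (X - C (PowerSeries.mk fun d => c i ^ d / d.factorial))) :
    Matrix.charpoly (A.map fun f => PowerSeries.coeff 1 f) =
      ∏ i, (X - C (c i)) := by
  classical
  set φ : PowerSeries ℂ →+* PowerSeries (Polynomial ℂ) := PowerSeries.map (Polynomial.C : ℂ →+* Polynomial ℂ) with hφ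
  set r : PowerSeries (Polynomial ℂ) := PowerSeries.C (R := Polynomial ℂ) Polynomial.X * PowerSeries.X + 1 with hr
  set ev : Polynomial (PowerSeries ℂ) →+* PowerSeries (Polynomial ℂ) := eval₂RingHom φ r with hev
  -- the matrix B = r • 1 - φ(A)
  set B : Matrix (Fin k) (Fin k) (PowerSeries (Polynomial ℂ)) :=
    Matrix.of (fun i j => (if i = j then r else 0) - φ (A i j)) with hB
  have hr0 : PowerSeries.constantCoeff r = 1 := by
    simp [hr]
  have hr1 : PowerSeries.coeff 1 r = Polynomial.X := by
    simp [hr]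
  have hA0 : ∀ i j, PowerSeries.constantCoeff (A i j) = if i = j then 1 else 0 := by
    intro i j
    have := congrFun (congrFun h0 i) j
    simpa [Matrix.map_apply, Matrix.one_apply] using this
  have hB0 : ∀ i j, PowerSeries.constantCoeff (B i j) = 0 := by
    intro i j
    simp only [hB, Matrix.of_apply, map_sub, hφ, stmt6_constantCoeff_map, hA0]
    by_cases h : i = j <;> simp [h, hr0, stmt6_constantCoeff_map, hA0]
  -- B = X • G
  set G : Matrix (Fin k) (Fin k) (PowerSeries (Polynomial ℂ)) :=
    Matrix.of (fun i j => PowerSeries.mk (fun d => PowerSeries.coeff (d + 1) (B i j))) with hG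
  have hBG : B = (PowerSeries.X : PowerSeries (Polynomial ℂ)) • G := by
    refine Matrix.ext fun i j => ?_
    simpa [hG, Matrix.smul_apply, smul_eq_mul] using stmt6_X_mul_shift (B i j) (hB0 i j)
  -- det B = ev (charpoly A)
  have hdet : B.det = ev (Matrix.charpoly A) := by
    rw [Matrix.charpoly, RingHom.map_det]
    congr 1
    refine Matrix.ext fun i j => ?_
    rcases eq_or_ne i j with h | h
    · subst h
      simp [hB, hev]
    · simp [hB, hev, Matrix.charmatrix_apply_ne, h]
  -- the factors on the RHS
  set E : Fin k → PowerSeries ℂ := fun i => PowerSeries.mk fun d => c i ^ d / d.factorial with hE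
  set F : Fin k → PowerSeries (Polynomial ℂ) := fun i => r - φ (E i) with hF
  have hF0 : ∀ i, PowerSeries.constantCoeff (F i) = 0 := by
    intro i
    simp [hF, hr0, hφ, hE, stmt6_constantCoeff_map, PowerSeries.constantCoeff_mk]
  set hfun : Fin k → PowerSeries (Polynomial ℂ) := fun i =>
    PowerSeries.mk (fun d => PowerSeries.coeff (d + 1) (F i)) with hhfun
  have hFh : ∀ i, F i = (PowerSeries.X : PowerSeries (Polynomial ℂ)) * hfun i := fun i =>
    stmt6_X_mul_shift (F i) (hF0 i)
  have hevprod : ev (Matrix.charpoly A) = ∏ i, F i := by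
    rw [hchar, map_prod]
    refine Finset.prod_congr rfl fun i _ => ?_
    simp [hev, hF, hE]
  -- cancel X ^ k
  have hXk : B.det = (PowerSeries.X : PowerSeries (Polynomial ℂ)) ^ k * G.det := by
    rw [hBG, Matrix.det_smul]
    simp
  have hprodX : (∏ i, F i) = (PowerSeries.X : PowerSeries (Polynomial ℂ)) ^ k * ∏ i, hfun i := by
    calc (∏ i, F i) = ∏ i, (PowerSeries.X : PowerSeries (Polynomial ℂ)) * hfun i := by
          exact Finset.prod_congr rfl fun i _ => hFh i
      _ = (∏ _i : Fin k, (PowerSeries.X : PowerSeries (Polynomial ℂ))) * ∏ i, hfun i := Finset.prod_mul_distrib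
      _ = (PowerSeries.X : PowerSeries (Polynomial ℂ)) ^ k * ∏ i, hfun i := by simp
  have hcancel : G.det = ∏ i, hfun i := by
    have hXne : (PowerSeries.X : PowerSeries (Polynomial ℂ)) ^ k ≠ 0 := pow_ne_zero _ PowerSeries.X_ne_zero
    apply mul_left_cancel₀ hXne
    rw [← hXk, ← hprodX, hdet, hevprod]
  -- apply constantCoeff
  have key := congrArg PowerSeries.constantCoeff hcancel
  rw [map_prod] at key
  have hGc : G.map PowerSeries.constantCoeff =
      Matrix.charmatrix (A.map fun f => PowerSeries.coeff 1 f) := by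
    refine Matrix.ext fun i j => ?_
    have : PowerSeries.constantCoeff (G i j) =
        PowerSeries.coeff 1 (B i j) := by
      simp [hG]
    rw [Matrix.map_apply, this]
    rcases eq_or_ne i j with h | h
    · subst h
      simp [hB, hr1, hφ, Matrix.charmatrix_apply_eq, PowerSeries.coeff_map]
    · simp [hB, h, hφ, Matrix.charmatrix_apply_ne, PowerSeries.coeff_map]
  have hl : PowerSeries.constantCoeff G.det =
      Matrix.charpoly (A.map fun f => PowerSeries.coeff 1 f) := by
    rw [RingHom.map_det, RingHom.mapMatrix_apply, hGc, Matrix.charpoly]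
  have hrr : ∀ i, PowerSeries.constantCoeff (hfun i) =
      Polynomial.X - Polynomial.C (c i) := by
    intro i
    have : PowerSeries.constantCoeff (hfun i) =
        PowerSeries.coeff 1 (F i) := by simp [hhfun]
    rw [this, hF]
    simp [hr1, hφ, hE, Nat.factorial]
  rw [hl] at key
  rw [key]
  exact Finset.prod_congr rfl fun i _ => by rw [hrr i]
end

section
/- Let A be a k×k matrix with entries in the formal power series ring ℂ[[y₁,…,yₙ]] whose constant-term matrix is the identity. Suppose the characteristic polynomial of A over ℂ[[y₁,…,yₙ]] factors as ∏_{i=1}^{k} (T − E_{m_i}), where each m_i ∈ ℤⁿ and E_m ∈ ℂ[[y₁,…,yₙ]] denotes the formal exponential exp(Σⱼ mⱼ yⱼ), i.e., the power series whose coefficient at the monomial y₁^{a₁}⋯yₙ^{aₙ} is ∏ⱼ mⱼ^{aⱼ}/aⱼ!. Let Ω be the k×k matrix over the polynomial ring ℂ[y₁,…,yₙ] whose (a,b) entry is the linear form Σⱼ κ_j(A_{ab})·yⱼ, where κ_j(f) denotes the coefficient of yⱼ in the power series f. Then the characteristic polynomial of Ω equals ∏_{i=1}^{k} (T − Σⱼ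 m_{ij}·yⱼ); in particular, the eigenvalues of Ω are the integral linear forms Σⱼ m_{ij} yⱼ. -/
/-- The formal exponential `exp(∑ⱼ mⱼ yⱼ) ∈ ℂ[[y₁,…,yₙ]]`: the multivariate power series
whose coefficient at the monomial `y₁^{a₁}⋯yₙ^{aₙ}` is `∏ⱼ mⱼ^{aⱼ}/aⱼ!`. -/
noncomputable def formalExp (n : ℕ) (m : Fin n → ℤ) : MvPowerSeries (Fin n) ℂ :=
  fun a : Fin n →₀ ℕ => ∏ j, (m j : ℂ) ^ (a j) / (a j).factorial

open Finset


/-- degree-`d` homogeneous part of a multivariate power series, as a polynomial. -/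
noncomputable def hpart {n : ℕ} (d : ℕ) (f : MvPowerSeries (Fin n) ℂ) :
    MvPolynomial (Fin n) ℂ :=
  ∑ a ∈ Finset.piAntidiag Finset.univ d,
    MvPolynomial.monomial (Finsupp.equivFunOnFinite.symm a)
      (MvPowerSeries.coeff (Finsupp.equivFunOnFinite.symm a) f)

lemma coeff_hpart {n : ℕ} (d : ℕ) (f : MvPowerSeries (Fin n) ℂ) (b : Fin n →₀ ℕ) :
    (hpart d f).coeff b =
      if (∑ j, b j) = d then MvPowerSeries.coeff b f else 0 := by
  classical
  rw [hpart, MvPolynomial.coeff_sum]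
  simp only [MvPolynomial.coeff_monomial]
  have : ∀ a : Fin n → ℕ,
      (Finsupp.equivFunOnFinite.symm a = b) = (a = Finsupp.equivFunOnFinite b) := by
    intro a
    simp [Equiv.symm_apply_eq]
  simp only [this]
  rw [Finset.sum_ite_eq' (Finset.piAntidiag Finset.univ d) (Finsupp.equivFunOnFinite b)]
  simp only [Finset.mem_piAntidiag, Finset.mem_univ, implies_true, and_true]
  split_ifs with h1 h2 h2
  · congr 1
    simp
  · exact absurd (by simpa [Finsupp.equivFunOnFinite] using h1) h2
  · exact absurd (by simpa [Finsupp.equivFunOnFinite] using h2) h1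
  · rfl

lemma sum_univ_eq_zero_iff {n : ℕ} (b : Fin n →₀ ℕ) : (∑ j, b j) = 0 ↔ b = 0 := by
  rw [Finset.sum_eq_zero_iff]
  constructor
  · intro h; ext j; exact h j (Finset.mem_univ j)
  · intro h j _; simp [h]

lemma hpart_one {n : ℕ} (d : ℕ) :
    hpart (n := n) d 1 = if d = 0 then 1 else 0 := by
  ext b
  rw [coeff_hpart, MvPowerSeries.coeff_one]
  by_cases hd : d = 0 <;> by_cases hb : b = 0 <;>
    simp [hd, hb, MvPolynomial.coeff_one, sum_univ_eq_zero_iff, eq_comm]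

lemma hpart_add {n : ℕ} (d : ℕ) (f g : MvPowerSeries (Fin n) ℂ) :
    hpart d (f + g) = hpart d f + hpart d g := by
  ext b
  simp only [coeff_hpart, MvPolynomial.coeff_add, map_add]
  split_ifs <;> simp

lemma hpart_mul {n : ℕ} (d : ℕ) (f g : MvPowerSeries (Fin n) ℂ) :
    hpart d (f * g) = ∑ p ∈ Finset.HasAntidiagonal.antidiagonal d, hpart p.1 f * hpart p.2 g := by
  classical
  ext b
  rw [coeff_hpart, MvPolynomial.coeff_sum]
  simp only [MvPolynomial.coeff_mul, coeff_hpart]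
  rw [Finset.sum_comm]
  have hterm : ∀ x ∈ Finset.HasAntidiagonal.antidiagonal b,
      (∑ p ∈ Finset.HasAntidiagonal.antidiagonal d,
        (if (∑ j, x.1 j) = p.1 then MvPowerSeries.coeff x.1 f else 0) *
        (if (∑ j, x.2 j) = p.2 then MvPowerSeries.coeff x.2 g else 0)) =
      if (∑ j, b j) = d then MvPowerSeries.coeff x.1 f * MvPowerSeries.coeff x.2 g
        else 0 := by
    intro x hx
    rw [Finset.HasAntidiagonal.mem_antidiagonal] at hx
    have hsum : (∑ j, b j) = (∑ j, x.1 j) + (∑ j, x.2 j) := by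
      rw [← Finset.sum_add_distrib]
      apply Finset.sum_congr rfl
      intro j _
      rw [← hx]; rfl
    have : ∀ p ∈ Finset.HasAntidiagonal.antidiagonal d,
        (if (∑ j, x.1 j) = p.1 then MvPowerSeries.coeff x.1 f else 0) *
        (if (∑ j, x.2 j) = p.2 then MvPowerSeries.coeff x.2 g else 0) =
        if p = ((∑ j, x.1 j), (∑ j, x.2 j)) then
          MvPowerSeries.coeff x.1 f * MvPowerSeries.coeff x.2 g else 0 := by
      intro p _
      rw [ite_mul, mul_ite]
      simp only [zero_mul, mul_zero]
      by_cases h1 : (∑ j, x.1 j) = p.1 <;> by_cases h2 : (∑ j, x.2 j) = p.2 <;>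
        simp_all [Prod.ext_iff, eq_comm]
    rw [Finset.sum_congr rfl this, Finset.sum_ite_eq' (Finset.HasAntidiagonal.antidiagonal d)]
    simp only [Finset.HasAntidiagonal.mem_antidiagonal]
    by_cases hd : (∑ j, b j) = d
    · rw [if_pos (by omega), if_pos hd]
    · rw [if_neg (by omega), if_neg hd]
  rw [Finset.sum_congr rfl hterm]
  split_ifs with h
  · rw [MvPowerSeries.coeff_mul]
  · simp

noncomputable def psi0 (n : ℕ) :
    MvPowerSeries (Fin n) ℂ →+* PowerSeries (MvPolynomial (Fin n) ℂ) where
  toFun f := PowerSeries.mk fun d => hpart d f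
  map_one' := by
    ext d
    simp [PowerSeries.coeff_mk, hpart_one, PowerSeries.coeff_one]
  map_mul' f g := by
    ext d
    simp only [PowerSeries.coeff_mk, PowerSeries.coeff_mul, hpart_mul]
  map_zero' := by
    ext d
    rw [PowerSeries.coeff_mk]
    have : hpart (n := n) d 0 = 0 := by
      ext b; rw [coeff_hpart]; split_ifs <;> simp
    simp [this]
  map_add' f g := by
    ext d
    rw [PowerSeries.coeff_mk, map_add, PowerSeries.coeff_mk, PowerSeries.coeff_mk, hpart_add]

lemma coeff_psi0 {n : ℕ} (d : ℕ) (f : MvPowerSeries (Fin n) ℂ) :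
    PowerSeries.coeff d (psi0 n f) = hpart d f := by
  simp [psi0, PowerSeries.coeff_mk]

lemma hpart_zero_eq {n : ℕ} (f : MvPowerSeries (Fin n) ℂ) :
    hpart 0 f = MvPolynomial.C (MvPowerSeries.constantCoeff f) := by
  ext b
  rw [coeff_hpart, MvPolynomial.coeff_C]
  by_cases hb : b = 0
  · subst hb
    rw [if_pos (by simp), if_pos rfl, ← MvPowerSeries.coeff_zero_eq_constantCoeff_apply]
  · rw [if_neg (fun h => hb ((sum_univ_eq_zero_iff b).mp h)), if_neg (fun h => hb h.symm)]

lemma eq_single_of_sum_eq_one {n : ℕ} {b : Fin n →₀ ℕ} (h : (∑ j, b j) = 1) :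
    ∃ j₀, b = Finsupp.single j₀ 1 := by
  obtain ⟨j₀, hj⟩ : ∃ j, b j ≠ 0 := by
    by_contra hc
    push_neg at hc
    rw [Finset.sum_eq_zero (fun j _ => hc j)] at h
    simp at h
  have h2 := Finset.add_sum_erase Finset.univ b (Finset.mem_univ j₀)
  rw [h] at h2
  have hbj : b j₀ = 1 ∧ (∑ x ∈ Finset.univ.erase j₀, b x) = 0 := by
    have := Nat.one_le_iff_ne_zero.mpr hj
    omega
  refine ⟨j₀, ?_⟩
  ext i
  by_cases hi : i = j₀
  · subst hi; simp [hbj.1]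
  · rw [Finsupp.single_apply, if_neg (fun hc => hi hc.symm)]
    exact (Finset.sum_eq_zero_iff.mp hbj.2) i (Finset.mem_erase.mpr ⟨hi, Finset.mem_univ i⟩)

lemma sum_single_one {n : ℕ} (j : Fin n) : (∑ i, (Finsupp.single j 1 : Fin n →₀ ℕ) i) = 1 := by
  simp [Finsupp.single_apply]

lemma hpart_one_deg {n : ℕ} (f : MvPowerSeries (Fin n) ℂ) :
    hpart 1 f = ∑ j, MvPolynomial.C (MvPowerSeries.coeff (Finsupp.single j 1) f) *
      MvPolynomial.X j := by
  classical
  ext b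
  rw [coeff_hpart, MvPolynomial.coeff_sum]
  have hterm : ∀ j : Fin n, MvPolynomial.coeff b
      (MvPolynomial.C (MvPowerSeries.coeff (Finsupp.single j 1) f) * MvPolynomial.X j) =
      if Finsupp.single j 1 = b then MvPowerSeries.coeff b f else 0 := by
    intro j
    rw [MvPolynomial.coeff_C_mul, MvPolynomial.coeff_X']
    split_ifs with h
    · rw [mul_one, h]
    · rw [mul_zero]
  rw [Finset.sum_congr rfl (fun j _ => hterm j)]
  by_cases h : (∑ j, b j) = 1
  · obtain ⟨j₀, rfl⟩ := eq_single_of_sum_eq_one h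
    rw [if_pos h, Finset.sum_eq_single j₀]
    · rw [if_pos rfl]
    · intro j _ hj
      rw [if_neg]
      intro hc
      exact hj (Finsupp.single_left_inj one_ne_zero |>.mp hc)
    · intro hc
      exact absurd (Finset.mem_univ j₀) hc
  · rw [if_neg h, eq_comm]
    apply Finset.sum_eq_zero
    intro j _
    rw [if_neg]
    intro hc
    exact h (hc ▸ sum_single_one j)

lemma hpart_formalExp {n : ℕ} (m : Fin n → ℤ) (d : ℕ) :
    hpart d (formalExp n m) = MvPolynomial.C ((d.factorial : ℂ)⁻¹) *
      (∑ j, MvPolynomial.C ((m j : ℂ)) * MvPolynomial.X j) ^ d := by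
  classical
  rw [Finset.sum_pow_eq_sum_piAntidiag, Finset.mul_sum, hpart]
  apply Finset.sum_congr rfl
  intro a ha
  rw [Finset.mem_piAntidiag] at ha
  obtain ⟨hsum, -⟩ := ha
  set s : Fin n →₀ ℕ := Finsupp.equivFunOnFinite.symm a with hs
  have h1 : ∀ j : Fin n, (MvPolynomial.C ((m j : ℂ)) * MvPolynomial.X j) ^ a j
      = MvPolynomial.C ((m j : ℂ) ^ a j) * (MvPolynomial.X j : MvPolynomial (Fin n) ℂ) ^ a j := by
    intro j; rw [mul_pow, map_pow]
  have hmono : (MvPolynomial.monomial s (1 : ℂ))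
      = ∏ j, (MvPolynomial.X j : MvPolynomial (Fin n) ℂ) ^ a j := by
    rw [MvPolynomial.monomial_eq, map_one, one_mul,
      Finsupp.prod_fintype _ _ (fun j => pow_zero _)]
    rfl
  have hcast : ((Nat.multinomial Finset.univ a : ℕ) : MvPolynomial (Fin n) ℂ)
      = MvPolynomial.C ((Nat.multinomial Finset.univ a : ℂ)) := by
    rw [map_natCast]
  rw [Finset.prod_congr rfl (fun j _ => h1 j), Finset.prod_mul_distrib, ← map_prod, hcast,
    ← hmono, MvPolynomial.C_mul_monomial, MvPolynomial.C_mul_monomial,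
    MvPolynomial.C_mul_monomial]
  congr 1
  · -- scalar identity
    have hcoeff : MvPowerSeries.coeff s (formalExp n m) = ∏ j, (m j : ℂ) ^ (a j) / (a j).factorial := by
      rfl
    rw [hcoeff]
    have hspec : ((∏ j, (a j).factorial : ℕ) : ℂ) * ((Nat.multinomial Finset.univ a : ℕ) : ℂ)
        = ((d.factorial : ℕ) : ℂ) := by
      rw [← Nat.cast_mul, Nat.multinomial_spec, hsum]
    have hF : ((∏ j, (a j).factorial : ℕ) : ℂ) ≠ 0 :=
      Nat.cast_ne_zero.mpr (Finset.prod_pos (fun j _ => (a j).factorial_pos)).ne'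
    have hD : ((d.factorial : ℕ) : ℂ) ≠ 0 := Nat.cast_ne_zero.mpr d.factorial_pos.ne'
    rw [Finset.prod_div_distrib, mul_one]
    push_cast at hspec
    have hF' : (∏ j, ((a j).factorial : ℂ)) ≠ 0 := by
      push_cast at hF; exact hF
    field_simp
    linear_combination (-∏ j, (m j : ℂ) ^ (a j)) * hspec

section ExpStuff

variable {R : Type*} [CommRing R] [Algebra ℂ R]

/-- `exp(tq)` as a power series in `t` over `R`. -/
noncomputable def ExpT (q : R) : PowerSeries R :=
  PowerSeries.mk fun d => (algebraMap ℂ R ((d.factorial : ℂ)⁻¹)) * q ^ d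

lemma coeff_ExpT (d : ℕ) (q : R) :
    PowerSeries.coeff (R := R) d (ExpT q) = (algebraMap ℂ R ((d.factorial : ℂ)⁻¹)) * q ^ d :=
  PowerSeries.coeff_mk _ _

lemma constantCoeff_ExpT (q : R) : PowerSeries.constantCoeff (R := R) (ExpT q) = 1 := by
  rw [← PowerSeries.coeff_zero_eq_constantCoeff_apply, coeff_ExpT]
  simp

/-- The unit factor in `exp(tq) - exp(tr) = t(q-r)·U`. -/
noncomputable def UU (q r : R) : PowerSeries R :=
  PowerSeries.mk fun e => (algebraMap ℂ R (((e + 1).factorial : ℂ)⁻¹)) *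
    ∑ j ∈ Finset.range (e + 1), q ^ j * r ^ (e - j)

lemma constantCoeff_UU (q r : R) : PowerSeries.constantCoeff (R := R) (UU q r) = 1 := by
  rw [← PowerSeries.coeff_zero_eq_constantCoeff_apply, UU, PowerSeries.coeff_mk]
  simp

lemma eq_X_mul_shift (f : PowerSeries R) (hf : PowerSeries.constantCoeff (R := R) f = 0) :
    f = PowerSeries.X * PowerSeries.mk fun d => PowerSeries.coeff (R := R) (d + 1) f := by
  ext d
  cases d with
  | zero => rw [PowerSeries.coeff_zero_X_mul, PowerSeries.coeff_zero_eq_constantCoeff_apply, hf]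
  | succ e => rw [PowerSeries.coeff_succ_X_mul, PowerSeries.coeff_mk]

lemma ExpT_sub_factor (q r : R) :
    ExpT q - ExpT r = PowerSeries.X * (PowerSeries.C (R := R) (q - r) * UU q r) := by
  ext d
  cases d with
  | zero =>
      rw [PowerSeries.coeff_zero_X_mul, map_sub, PowerSeries.coeff_zero_eq_constantCoeff_apply,
        PowerSeries.coeff_zero_eq_constantCoeff_apply, constantCoeff_ExpT, constantCoeff_ExpT,
        sub_self]
  | succ e =>
      rw [PowerSeries.coeff_succ_X_mul, map_sub, coeff_ExpT, coeff_ExpT,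
        PowerSeries.coeff_C_mul, UU, PowerSeries.coeff_mk]
      have hg := geom_sum₂_mul q r (e + 1)
      simp only [Nat.add_sub_cancel] at hg
      linear_combination (-(algebraMap ℂ R (((e + 1).factorial : ℂ)⁻¹))) * hg

end ExpStuff

set_option maxHeartbeats 1000000 in
lemma X_pow_cancel {R : Type*} [CommRing R] [IsDomain R] {k : ℕ} {u v : PowerSeries R}
    (h : PowerSeries.X ^ k * u = PowerSeries.X ^ k * v) : u = v :=
  mul_left_cancel₀ (pow_ne_zero _ PowerSeries.X_ne_zero) h

set_option maxHeartbeats 1000000 in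
open Polynomial in
theorem stmt_7 (n k : ℕ) (A : Matrix (Fin k) (Fin k) (MvPowerSeries (Fin n) ℂ))
    (m : Fin k → Fin n → ℤ)
    (h0 : A.map (MvPowerSeries.constantCoeff : MvPowerSeries (Fin n) ℂ →+* ℂ) = 1)
    (hchar : Matrix.charpoly A = ∏ i, (X - C (formalExp n (m i))))
    (Ω : Matrix (Fin k) (Fin k) (MvPolynomial (Fin n) ℂ))
    (hΩ : ∀ a b, Ω a b = ∑ j, MvPolynomial.C
      (MvPowerSeries.coeff (Finsupp.single j 1) (A a b)) * MvPolynomial.X j) :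
    Matrix.charpoly Ω =
      ∏ i, (X - C (∑ j, MvPolynomial.C ((m i j : ℤ) : ℂ) * MvPolynomial.X j)) := by
  classical
  let Q := Polynomial (MvPolynomial (Fin n) ℂ)
  let Cq : MvPolynomial (Fin n) ℂ →+* Q := Polynomial.C
  let ψ : MvPowerSeries (Fin n) ℂ →+* PowerSeries Q := (PowerSeries.map Cq).comp (psi0 n)
  have halg : ∀ x : ℂ, algebraMap ℂ Q x = Polynomial.C (MvPolynomial.C x) := fun x => by
    rw [Polynomial.algebraMap_apply, MvPolynomial.algebraMap_eq]
  have hψcoeff : ∀ (d : ℕ) (f : MvPowerSeries (Fin n) ℂ),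
      PowerSeries.coeff (R := Q) d (ψ f) = Cq (hpart d f) := by
    intro d f
    show PowerSeries.coeff (R := Q) d (PowerSeries.map Cq (psi0 n f)) = _
    rw [PowerSeries.coeff_map, coeff_psi0]
  let L : Fin k → MvPolynomial (Fin n) ℂ :=
    fun i => ∑ j, MvPolynomial.C ((m i j : ℂ)) * MvPolynomial.X j
  have hψexp : ∀ i, ψ (formalExp n (m i)) = ExpT (Polynomial.C (L i) : Q) := by
    intro i
    ext d
    rw [hψcoeff, hpart_formalExp, coeff_ExpT, halg, map_mul, map_pow]
  have h1 : (A.map ψ).charpoly = ∏ i, (X - C (ExpT (Polynomial.C (L i) : Q))) := by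
    rw [Matrix.charpoly_map, hchar, Polynomial.map_prod]
    exact Finset.prod_congr rfl fun i _ => by
      rw [Polynomial.map_sub, Polynomial.map_X, Polynomial.map_C, hψexp]
  let r : PowerSeries Q := ExpT (Polynomial.X : Q)
  let B : Matrix (Fin k) (Fin k) (PowerSeries Q) :=
    Matrix.of fun a b => (if a = b then r else 0) - (A.map ψ) a b
  have h2 : Polynomial.eval r (A.map ψ).charpoly = B.det := by
    have hcp : (A.map ψ).charpoly = (Matrix.charmatrix (A.map ψ)).det := rfl
    rw [hcp]
    refine Eq.trans (RingHom.map_det (Polynomial.evalRingHom r)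
      (Matrix.charmatrix (A.map ψ))) ?_
    refine congrArg Matrix.det (Matrix.ext fun a b => ?_)
    rw [RingHom.mapMatrix_apply, Matrix.map_apply]
    by_cases hab : a = b
    · subst hab
      rw [Matrix.charmatrix_apply_eq]
      show Polynomial.eval r (X - C ((A.map ψ) a a)) = B a a
      rw [Polynomial.eval_sub, Polynomial.eval_X, Polynomial.eval_C]
      show _ = (if a = a then r else 0) - (A.map ψ) a a
      rw [if_pos rfl]
    · rw [Matrix.charmatrix_apply_ne _ _ _ hab]
      show Polynomial.eval r (-C ((A.map ψ) a b)) = B a b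
      rw [Polynomial.eval_neg, Polynomial.eval_C]
      show _ = (if a = b then r else 0) - (A.map ψ) a b
      rw [if_neg hab, zero_sub]
  have h3 : B.det = ∏ i, (r - ExpT (Polynomial.C (L i) : Q)) := by
    rw [← h2, h1, Polynomial.eval_prod]
    exact Finset.prod_congr rfl fun i _ => by
      rw [Polynomial.eval_sub, Polynomial.eval_X, Polynomial.eval_C]
  let N : Matrix (Fin k) (Fin k) (PowerSeries Q) :=
    Matrix.of fun a b => PowerSeries.mk fun d => PowerSeries.coeff (R := Q) (d + 1) (B a b)
  have hA0 : ∀ a b, MvPowerSeries.constantCoeff (A a b) =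
      if a = b then 1 else 0 := by
    intro a b
    have h := Matrix.ext_iff.mpr h0 a b
    simpa [Matrix.map_apply, Matrix.one_apply] using h
  have hBcc : ∀ a b, PowerSeries.constantCoeff (R := Q) (B a b) = 0 := by
    intro a b
    show PowerSeries.constantCoeff (R := Q) ((if a = b then r else 0) - (A.map ψ) a b) = 0
    rw [map_sub]
    have h1' : PowerSeries.constantCoeff (R := Q) ((A.map ψ) a b) = if a = b then 1 else 0 := by
      show PowerSeries.constantCoeff (R := Q) (ψ (A a b)) = _
      rw [← PowerSeries.coeff_zero_eq_constantCoeff_apply, hψcoeff, hpart_zero_eq, hA0]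
      split_ifs <;> simp [Cq]
    rw [h1']
    split_ifs with h
    · rw [constantCoeff_ExpT, sub_self]
    · rw [map_zero, sub_self]
  have hBN : B = (PowerSeries.X : PowerSeries Q) • N :=
    Matrix.ext fun a b => by
      rw [Matrix.smul_apply, smul_eq_mul]
      exact eq_X_mul_shift (B a b) (hBcc a b)
  have hdetB : B.det = (PowerSeries.X : PowerSeries Q) ^ k * N.det := by
    rw [hBN, Matrix.det_smul, Fintype.card_fin]
  have hprod : ∏ i, (r - ExpT (Polynomial.C (L i) : Q))
      = (PowerSeries.X : PowerSeries Q) ^ k *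
        ∏ i, (PowerSeries.C (R := Q) (Polynomial.X - Polynomial.C (L i)) *
          UU (Polynomial.X : Q) (Polynomial.C (L i))) := by
    rw [Finset.prod_congr rfl fun i _ => ExpT_sub_factor (Polynomial.X : Q) (Polynomial.C (L i)),
      Finset.prod_mul_distrib, Finset.prod_const, Finset.card_univ, Fintype.card_fin]
  have h5 : N.det = ∏ i, (PowerSeries.C (R := Q) (Polynomial.X - Polynomial.C (L i)) *
      UU (Polynomial.X : Q) (Polynomial.C (L i))) :=
    X_pow_cancel (R := Polynomial (MvPolynomial (Fin n) ℂ)) (by rw [← hdetB, h3, hprod])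
  have h6 : (N.map (PowerSeries.constantCoeff (R := Q))).det
      = ∏ i, (Polynomial.X - Polynomial.C (L i)) := by
    have hmd := RingHom.map_det (PowerSeries.constantCoeff (R := Q)) N
    rw [RingHom.mapMatrix_apply] at hmd
    rw [← hmd, h5, map_prod]
    exact Finset.prod_congr rfl fun i _ => by
      rw [map_mul, PowerSeries.constantCoeff_C, constantCoeff_UU, mul_one]
  have hNmap : N.map (PowerSeries.constantCoeff (R := Q)) = Matrix.charmatrix Ω := by
    refine Matrix.ext fun a b => ?_
    rw [Matrix.map_apply]
    have hc : PowerSeries.constantCoeff (R := Q) (N a b) = PowerSeries.coeff (R := Q) 1 (B a b) := by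
      show PowerSeries.constantCoeff (R := Q)
        (PowerSeries.mk fun d => PowerSeries.coeff (R := Q) (d + 1) (B a b)) = _
      rw [← PowerSeries.coeff_zero_eq_constantCoeff_apply, PowerSeries.coeff_mk]
    rw [hc]
    show PowerSeries.coeff (R := Q) 1 ((if a = b then r else 0) - (A.map ψ) a b) = _
    rw [map_sub]
    have hAab : PowerSeries.coeff (R := Q) 1 ((A.map ψ) a b) = Polynomial.C (Ω a b) := by
      show PowerSeries.coeff (R := Q) 1 (ψ (A a b)) = _
      rw [hψcoeff, hpart_one_deg, ← hΩ]
    have hr1 : PowerSeries.coeff (R := Q) 1 r = (Polynomial.X : Q) := by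
      rw [coeff_ExpT]
      simp [halg]
    rw [hAab]
    by_cases hab : a = b
    · subst hab
      rw [if_pos rfl, hr1, Matrix.charmatrix_apply_eq]
    · rw [if_neg hab, Matrix.charmatrix_apply_ne _ _ _ hab, map_zero, zero_sub]
  show (Matrix.charmatrix Ω).det = _
  rw [← hNmap, h6]
end

section
/- Let R be a commutative ring and let D be an a×b matrix, P an a×a matrix, and Q a b×b matrix, all with entries in the formal power series ring R[[y₁,…,yₙ]], satisfying the identity D·Q = P·D. Suppose the constant-term matrix of D is zero and the constant-term matrices of P and Q are identity matrices. For a matrix X over R[[y₁,…,yₙ]], let X₁ denote the matrix over the polynomial ring R[y₁,…,yₙ] whose entries are the degree-one homogeneous parts Σⱼ κ_j(X_{ab})·yⱼ of the entries of X, where κ_j(f) is the coefficient of yⱼ in f. Then D₁·Q₁ = P₁·D₁ as matrices over R[y₁,…,yₙ]. -/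
open scoped BigOperators

open Finsupp in
lemma antidiag_ee {α : Type*} [DecidableEq α] (l m : α) :
    Finset.HasAntidiagonal.antidiagonal (single l 1 + single m 1) =
      {(0, single l 1 + single m 1), (single l 1, single m 1),
       (single m 1, single l 1), (single l 1 + single m 1, 0)} := by
  ext ⟨u, v⟩
  simp only [Finset.HasAntidiagonal.mem_antidiagonal, Finset.mem_insert, Finset.mem_singleton, Prod.mk.injEq]
  constructor
  · intro h
    have key : ∀ x, u x + v x = (single l 1) x + (single m 1) x := fun x => by
      rw [← Finsupp.add_apply, h, Finsupp.add_apply]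
    by_cases hlm : l = m
    · subst hlm
      have hu : u = single l (u l) := by
        ext x
        by_cases hx : l = x
        · subst hx; simp
        · have hk := key x
          simp only [single_apply, if_neg hx] at hk ⊢
          omega
      have hv : v = single l (v l) := by
        ext x
        by_cases hx : l = x
        · subst hx; simp
        · have hk := key x
          simp only [single_apply, if_neg hx] at hk ⊢
          omega
      have h2 : u l + v l = 2 := by simpa using key l
      rcases (by omega : u l = 0 ∧ v l = 2 ∨ u l = 1 ∧ v l = 1 ∨ u l = 2 ∧ v l = 0) with
        ⟨h1,h2⟩|⟨h1,h2⟩|⟨h1,h2⟩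
      · left
        rw [hu, hv, h1, h2]
        exact ⟨by simp, by rw [(by omega : (2:ℕ) = 1 + 1), single_add]⟩
      · right; left
        rw [hu, hv, h1, h2]; exact ⟨rfl, rfl⟩
      · right; right; right
        rw [hu, hv, h1, h2]
        exact ⟨by rw [(by omega : (2:ℕ) = 1 + 1), single_add], by simp⟩
    · have hml : ¬ m = l := fun h => hlm h.symm
      have hul : u l + v l = 1 := by simpa [single_apply, hml] using key l
      have hum : u m + v m = 1 := by simpa [single_apply, hlm] using key m
      have hu : u = single l (u l) + single m (u m) := by
        ext x
        by_cases h1 : l = x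
        · subst h1; simp [single_apply, hml]
        · by_cases h2 : m = x
          · subst h2; simp [single_apply, hlm]
          · have hk := key x
            simp only [Finsupp.add_apply, single_apply, if_neg h1, if_neg h2] at hk ⊢
            omega
      have hv : v = single l (v l) + single m (v m) := by
        ext x
        by_cases h1 : l = x
        · subst h1; simp [single_apply, hml]
        · by_cases h2 : m = x
          · subst h2; simp [single_apply, hlm]
          · have hk := key x
            simp only [Finsupp.add_apply, single_apply, if_neg h1, if_neg h2] at hk ⊢
            omega
      rcases (by omega : u l = 0 ∧ v l = 1 ∨ u l = 1 ∧ v l = 0) with ⟨h1,h2⟩|⟨h1,h2⟩ <;>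
        rcases (by omega : u m = 0 ∧ v m = 1 ∨ u m = 1 ∧ v m = 0) with ⟨h3,h4⟩|⟨h3,h4⟩
      · left; rw [hu, hv, h1, h2, h3, h4]; simp
      · right; right; left; rw [hu, hv, h1, h2, h3, h4]; simp [add_comm]
      · right; left; rw [hu, hv, h1, h2, h3, h4]; simp
      · right; right; right; rw [hu, hv, h1, h2, h3, h4]; simp
  · rintro (⟨rfl, rfl⟩|⟨rfl, rfl⟩|⟨rfl, rfl⟩|⟨rfl, rfl⟩) <;> simp [add_comm]

open Finsupp MvPowerSeries in
lemma coeff_mul_ee_ne {σ : Type*} [DecidableEq σ] {R : Type*} [CommRing R]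
    {l m : σ} (h : l ≠ m) (f g : MvPowerSeries σ R) :
    coeff (single l 1 + single m 1) (f * g) =
      constantCoeff f * coeff (single l 1 + single m 1) g
      + coeff (single l 1) f * coeff (single m 1) g
      + coeff (single m 1) f * coeff (single l 1) g
      + coeff (single l 1 + single m 1) f * constantCoeff g := by
  have h10 : Finsupp.single l 1 ≠ (0 : σ →₀ ℕ) := by simp
  have h20 : Finsupp.single m 1 ≠ (0 : σ →₀ ℕ) := by simp
  have hlm : Finsupp.single l 1 ≠ Finsupp.single m 1 := by
    simp [Finsupp.single_eq_single_iff, h]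
  have hd0 : Finsupp.single l 1 + Finsupp.single m 1 ≠ (0 : σ →₀ ℕ) := by
    intro he
    have := DFunLike.congr_fun he l
    simp [Finsupp.single_apply, h] at this
  have hdl : Finsupp.single l 1 + Finsupp.single m 1 ≠ Finsupp.single l 1 := by
    intro he
    have := DFunLike.congr_fun he m
    simp [Finsupp.single_apply, h, Ne.symm h] at this
  have hdm : Finsupp.single l 1 + Finsupp.single m 1 ≠ Finsupp.single m 1 := by
    intro he
    have := DFunLike.congr_fun he l
    simp [Finsupp.single_apply, h, Ne.symm h] at this
  rw [MvPowerSeries.coeff_mul, antidiag_ee]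
  rw [Finset.sum_insert (by simp [Prod.ext_iff, h10.symm, h20.symm, hd0.symm]),
    Finset.sum_insert (by simp [Prod.ext_iff, hlm, hdl.symm, h20]),
    Finset.sum_insert (by simp [Prod.ext_iff, hdm.symm, h10]),
    Finset.sum_singleton]
  simp only [MvPowerSeries.coeff_zero_eq_constantCoeff]
  ring

open Finsupp MvPowerSeries in
lemma coeff_mul_ee_eq {σ : Type*} [DecidableEq σ] {R : Type*} [CommRing R]
    (l : σ) (f g : MvPowerSeries σ R) :
    coeff (single l 1 + single l 1) (f * g) =
      constantCoeff f * coeff (single l 1 + single l 1) g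
      + coeff (single l 1) f * coeff (single l 1) g
      + coeff (single l 1 + single l 1) f * constantCoeff g := by
  have h10 : Finsupp.single l 1 ≠ (0 : σ →₀ ℕ) := by simp
  have hd0 : Finsupp.single l 1 + Finsupp.single l 1 ≠ (0 : σ →₀ ℕ) := by
    intro he
    have := DFunLike.congr_fun he l
    simp [Finsupp.single_apply] at this
  have hdl : Finsupp.single l 1 + Finsupp.single l 1 ≠ Finsupp.single l 1 := by
    intro he
    have := DFunLike.congr_fun he l
    simp [Finsupp.single_apply] at this
  rw [MvPowerSeries.coeff_mul, antidiag_ee, Finset.insert_idem]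
  rw [Finset.sum_insert (by simp [Prod.ext_iff, h10.symm, hd0.symm]),
    Finset.sum_insert (by simp [Prod.ext_iff, hdl.symm, h10]),
    Finset.sum_singleton]
  simp only [MvPowerSeries.coeff_zero_eq_constantCoeff]
  ring

open Finsupp MvPowerSeries in
lemma linearPart_mul_apply' {R : Type*} [CommRing R] {n p q r : ℕ}
    (X : Matrix (Fin p) (Fin q) (MvPowerSeries (Fin n) R))
    (Y : Matrix (Fin q) (Fin r) (MvPowerSeries (Fin n) R)) (i : Fin p) (j : Fin r) :
    (∑ k, (∑ l : Fin n, MvPolynomial.C (coeff (single l 1) (X i k)) * MvPolynomial.X l) *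
          (∑ m : Fin n, MvPolynomial.C (coeff (single m 1) (Y k j)) * MvPolynomial.X m)) =
    ∑ l : Fin n, ∑ m : Fin n,
      MvPolynomial.C (∑ k, coeff (single l 1) (X i k) * coeff (single m 1) (Y k j)) *
        (MvPolynomial.X l * MvPolynomial.X m) := by
  simp only [Finset.sum_mul, Finset.mul_sum]
  rw [Finset.sum_comm]
  conv_rhs => rw [Finset.sum_comm]
  refine Finset.sum_congr rfl fun l _ => ?_
  rw [Finset.sum_comm]
  refine Finset.sum_congr rfl fun m _ => ?_
  rw [map_sum, Finset.sum_mul]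
  refine Finset.sum_congr rfl fun k _ => ?_
  rw [map_mul]
  ring

/-- The linearization of a matrix over the formal power series ring `R[[y₁,…,yₙ]]`:
the matrix over `R[y₁,…,yₙ]` whose entries are the degree-one homogeneous parts
`∑ⱼ κ_j(X_{ab})·yⱼ` of the entries, where `κ_j(f)` is the coefficient of `yⱼ` in `f`. -/
noncomputable def linearPart {R : Type*} [CommRing R] {n : ℕ} {ι κ : Type*}
    (X : Matrix ι κ (MvPowerSeries (Fin n) R)) :
    Matrix ι κ (MvPolynomial (Fin n) R) :=
  fun i j => ∑ l : Fin n,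
    MvPolynomial.C (MvPowerSeries.coeff (Finsupp.single l 1) (X i j)) * MvPolynomial.X l

theorem stmt_8 (R : Type*) [CommRing R] (n a b : ℕ)
    (D : Matrix (Fin a) (Fin b) (MvPowerSeries (Fin n) R))
    (P : Matrix (Fin a) (Fin a) (MvPowerSeries (Fin n) R))
    (Q : Matrix (Fin b) (Fin b) (MvPowerSeries (Fin n) R))
    (hDQ : D * Q = P * D)
    (hD0 : D.map (MvPowerSeries.constantCoeff : MvPowerSeries (Fin n) R →+* R) = 0)
    (hP0 : P.map (MvPowerSeries.constantCoeff : MvPowerSeries (Fin n) R →+* R) = 1)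
    (hQ0 : Q.map (MvPowerSeries.constantCoeff : MvPowerSeries (Fin n) R →+* R) = 1) :
    linearPart D * linearPart Q = linearPart P * linearPart D := by
  classical
  have hD0' : ∀ i k, MvPowerSeries.constantCoeff (D i k) = 0 := fun i k => by
    have := congrFun (congrFun hD0 i) k
    simpa [Matrix.map_apply] using this
  have hP0' : ∀ i k, MvPowerSeries.constantCoeff (P i k) = if i = k then 1 else 0 :=
    fun i k => by
      have := congrFun (congrFun hP0 i) k
      simpa [Matrix.map_apply, Matrix.one_apply] using this
  have hQ0' : ∀ i k, MvPowerSeries.constantCoeff (Q i k) = if i = k then 1 else 0 :=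
    fun i k => by
      have := congrFun (congrFun hQ0 i) k
      simpa [Matrix.map_apply, Matrix.one_apply] using this
  have hco : ∀ (d : Fin n →₀ ℕ) (i : Fin a) (j : Fin b),
      MvPowerSeries.coeff d ((D * Q) i j) = MvPowerSeries.coeff d ((P * D) i j) :=
    fun d i j => by rw [hDQ]
  -- diagonal key identity
  have key1 : ∀ (l : Fin n) (i : Fin a) (j : Fin b),
      (∑ k, MvPowerSeries.coeff (Finsupp.single l 1) (D i k) *
          MvPowerSeries.coeff (Finsupp.single l 1) (Q k j)) =
      ∑ k, MvPowerSeries.coeff (Finsupp.single l 1) (P i k) *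
          MvPowerSeries.coeff (Finsupp.single l 1) (D k j) := by
    intro l i j
    have h := hco (Finsupp.single l 1 + Finsupp.single l 1) i j
    rw [Matrix.mul_apply, Matrix.mul_apply, map_sum, map_sum] at h
    simp only [coeff_mul_ee_eq, hD0', hP0', hQ0', Finset.sum_add_distrib, ite_mul, mul_ite,
      one_mul, mul_one, zero_mul, mul_zero, Finset.sum_ite_eq, Finset.sum_ite_eq',
      Finset.mem_univ, if_true, zero_add, add_zero, Finset.sum_const_zero] at h
    linear_combination h
  -- off-diagonal key identity
  have key2 : ∀ (l m : Fin n), l ≠ m → ∀ (i : Fin a) (j : Fin b),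
      (∑ k, MvPowerSeries.coeff (Finsupp.single l 1) (D i k) *
          MvPowerSeries.coeff (Finsupp.single m 1) (Q k j))
      + (∑ k, MvPowerSeries.coeff (Finsupp.single m 1) (D i k) *
          MvPowerSeries.coeff (Finsupp.single l 1) (Q k j)) =
      (∑ k, MvPowerSeries.coeff (Finsupp.single l 1) (P i k) *
          MvPowerSeries.coeff (Finsupp.single m 1) (D k j))
      + ∑ k, MvPowerSeries.coeff (Finsupp.single m 1) (P i k) *
          MvPowerSeries.coeff (Finsupp.single l 1) (D k j) := by
    intro l m hlm i j
    have h := hco (Finsupp.single l 1 + Finsupp.single m 1) i j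
    rw [Matrix.mul_apply, Matrix.mul_apply, map_sum, map_sum] at h
    simp only [coeff_mul_ee_ne hlm, hD0', hP0', hQ0', Finset.sum_add_distrib, ite_mul, mul_ite,
      one_mul, mul_one, zero_mul, mul_zero, Finset.sum_ite_eq, Finset.sum_ite_eq',
      Finset.mem_univ, if_true, zero_add, add_zero, Finset.sum_const_zero] at h
    linear_combination h
  refine Matrix.ext fun i j => ?_
  rw [Matrix.mul_apply, Matrix.mul_apply]
  simp only [linearPart]
  rw [linearPart_mul_apply', linearPart_mul_apply', ← Finset.sum_product', ← Finset.sum_product',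
    ← sub_eq_zero, ← Finset.sum_sub_distrib]
  refine Finset.sum_ninvolution Prod.swap ?_ ?_ (fun _ => Finset.mem_univ _) (fun p => rfl)
  · rintro ⟨l, m⟩
    simp only [Prod.swap_prod_mk]
    by_cases hlm : l = m
    · subst hlm
      rw [key1 l i j]
      ring
    · have h2 := congrArg (MvPolynomial.C (R := R) (σ := Fin n)) (key2 l m hlm i j)
      rw [map_add, map_add] at h2
      linear_combination (MvPolynomial.X l * MvPolynomial.X m : MvPolynomial (Fin n) R) * h2
  · rintro ⟨l, m⟩ hf hswap
    apply hf
    have : m = l := by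
      have := congrArg Prod.fst hswap
      simpa using this
    subst this
    rw [key1 m i j]
    ring
end

section
/- Let F be the free group on generators γ₁, γ₂, γ₃, γ₄ and let G be the quotient of F by the normal closure of the five relators [γ₃γ₁, γ₂], [γ₁γ₂, γ₃], [γ₁, γ₄], [γ₂, γ₄], [γ₃, γ₄], where [α,β] = αβα⁻¹β⁻¹. The endomorphism of F determined by γ₁ ↦ (γ₁γ₂)γ₁(γ₁γ₂)⁻¹, γ₂ ↦ (γ₁γ₂)γ₂(γ₁γ₂)⁻¹, γ₃ ↦ γ₃, γ₄ ↦ γ₄ sends each relator into the normal closure of the relators, and hence descends to a well-defined automorphism of G. -/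
open scoped commutatorElement
/-- The generators `γ₁, γ₂, γ₃, γ₄` of the free group on four letters. -/
def γ (i : Fin 4) : FreeGroup (Fin 4) := FreeGroup.of i

/-- The relators `[γ₃γ₁, γ₂], [γ₁γ₂, γ₃], [γ₁, γ₄], [γ₂, γ₄], [γ₃, γ₄]` of the
fundamental group of the complement of the arrangement. -/
def rels : Set (FreeGroup (Fin 4)) :=
  {⁅γ 2 * γ 0, γ 1⁆, ⁅γ 0 * γ 1, γ 2⁆, ⁅γ 0, γ 3⁆, ⁅γ 1, γ 3⁆, ⁅γ 2, γ 3⁆}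

/-- The Artin action of the pure braid generator `A_{1,2}`:
`γ₁ ↦ (γ₁γ₂)γ₁(γ₁γ₂)⁻¹`, `γ₂ ↦ (γ₁γ₂)γ₂(γ₁γ₂)⁻¹`, `γ₃ ↦ γ₃`, `γ₄ ↦ γ₄`. -/
def φ : FreeGroup (Fin 4) →* FreeGroup (Fin 4) :=
  FreeGroup.lift ![(γ 0 * γ 1) * γ 0 * (γ 0 * γ 1)⁻¹,
    (γ 0 * γ 1) * γ 1 * (γ 0 * γ 1)⁻¹, γ 2, γ 3]

def φ' : FreeGroup (Fin 4) →* FreeGroup (Fin 4) :=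
  FreeGroup.lift ![(γ 0 * γ 1)⁻¹ * γ 0 * (γ 0 * γ 1),
    (γ 0 * γ 1)⁻¹ * γ 1 * (γ 0 * γ 1), γ 2, γ 3]

lemma comp_id₁ : φ'.comp φ = MonoidHom.id _ := by
  ext i
  fin_cases i <;> simp [φ, φ', γ, map_mul, map_inv] <;> group

lemma comp_id₂ : φ.comp φ' = MonoidHom.id _ := by
  ext i
  fin_cases i <;> simp [φ, φ', γ, map_mul, map_inv] <;> group

lemma conj_comm (g x y : PresentedGroup rels) (h : ⁅x, y⁆ = 1) :
    ⁅g * x * g⁻¹, g * y * g⁻¹⁆ = 1 := by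
  rw [commutatorElement_eq_one_iff_commute] at h ⊢
  unfold Commute SemiconjBy at h ⊢
  group
  rw [mul_assoc g, h, ← mul_assoc]

lemma key : ∀ r ∈ rels, PresentedGroup.mk rels (φ r) = 1 := by
  classical
  set A := PresentedGroup.mk rels (FreeGroup.of 0) with hA
  set B := PresentedGroup.mk rels (FreeGroup.of 1) with hB
  set C := PresentedGroup.mk rels (FreeGroup.of 2) with hC
  set D := PresentedGroup.mk rels (FreeGroup.of 3) with hD
  have mk1 : ∀ r ∈ rels, PresentedGroup.mk rels r = 1 := fun r hr =>
    (QuotientGroup.eq_one_iff _).2 (Subgroup.subset_normalClosure hr)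
  have h1 : ⁅C * A, B⁆ = 1 := by
    have := mk1 _ (show ⁅γ 2 * γ 0, γ 1⁆ ∈ rels by simp [rels])
    simpa [map_commutatorElement, map_mul, γ] using this
  have h2 : ⁅A * B, C⁆ = 1 := by
    have := mk1 _ (show ⁅γ 0 * γ 1, γ 2⁆ ∈ rels by simp [rels])
    simpa [map_commutatorElement, map_mul, γ] using this
  have h3 : ⁅A, D⁆ = 1 := by
    have := mk1 _ (show ⁅γ 0, γ 3⁆ ∈ rels by simp [rels])
    simpa [map_commutatorElement, γ] using this
  have h4 : ⁅B, D⁆ = 1 := by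
    have := mk1 _ (show ⁅γ 1, γ 3⁆ ∈ rels by simp [rels])
    simpa [map_commutatorElement, γ] using this
  have h5 : ⁅C, D⁆ = 1 := by
    have := mk1 _ (show ⁅γ 2, γ 3⁆ ∈ rels by simp [rels])
    simpa [map_commutatorElement, γ] using this
  have c2 : Commute (A * B) C := commutatorElement_eq_one_iff_commute.1 h2
  have c3 : Commute A D := commutatorElement_eq_one_iff_commute.1 h3
  have c4 : Commute B D := commutatorElement_eq_one_iff_commute.1 h4
  have cABD : Commute (A * B) D := c3.mul_left c4
  rintro r (rfl | rfl | rfl | rfl | rfl) <;>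
    simp only [map_commutatorElement, map_mul, map_inv, φ, γ, FreeGroup.lift_apply_of,
      Matrix.cons_val_zero, Matrix.cons_val_one, Matrix.head_cons,
      Matrix.cons_val_two, Matrix.tail_cons, Matrix.cons_val_three,
      ← hA, ← hB, ← hC, ← hD]
  · -- ⁅C * ((A*B)*A*(A*B)⁻¹), (A*B)*B*(A*B)⁻¹⁆ = 1
    have : C * ((A * B) * A * (A * B)⁻¹) = (A * B) * (C * A) * (A * B)⁻¹ := by
      rw [← mul_assoc, ← mul_assoc, ← c2.eq, mul_assoc (A*B) C A]
    rw [this]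
    exact conj_comm _ _ _ h1
  · have : (A * B) * A * (A * B)⁻¹ * ((A * B) * B * (A * B)⁻¹) = A * B := by group
    rw [this]; exact h2
  · exact commutatorElement_eq_one_iff_commute.2 ((cABD.mul_left c3).mul_left cABD.inv_left)
  · exact commutatorElement_eq_one_iff_commute.2 ((cABD.mul_left c4).mul_left cABD.inv_left)
  · exact h5


lemma key' : ∀ r ∈ rels, PresentedGroup.mk rels (φ' r) = 1 := by
  classical
  set A := PresentedGroup.mk rels (FreeGroup.of 0) with hA
  set B := PresentedGroup.mk rels (FreeGroup.of 1) with hB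
  set C := PresentedGroup.mk rels (FreeGroup.of 2) with hC
  set D := PresentedGroup.mk rels (FreeGroup.of 3) with hD
  have mk1 : ∀ r ∈ rels, PresentedGroup.mk rels r = 1 := fun r hr =>
    (QuotientGroup.eq_one_iff _).2 (Subgroup.subset_normalClosure hr)
  have h1 : ⁅C * A, B⁆ = 1 := by
    have := mk1 _ (show ⁅γ 2 * γ 0, γ 1⁆ ∈ rels by simp [rels])
    simpa [map_commutatorElement, map_mul, γ] using this
  have h2 : ⁅A * B, C⁆ = 1 := by
    have := mk1 _ (show ⁅γ 0 * γ 1, γ 2⁆ ∈ rels by simp [rels])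
    simpa [map_commutatorElement, map_mul, γ] using this
  have h3 : ⁅A, D⁆ = 1 := by
    have := mk1 _ (show ⁅γ 0, γ 3⁆ ∈ rels by simp [rels])
    simpa [map_commutatorElement, γ] using this
  have h4 : ⁅B, D⁆ = 1 := by
    have := mk1 _ (show ⁅γ 1, γ 3⁆ ∈ rels by simp [rels])
    simpa [map_commutatorElement, γ] using this
  have h5 : ⁅C, D⁆ = 1 := by
    have := mk1 _ (show ⁅γ 2, γ 3⁆ ∈ rels by simp [rels])
    simpa [map_commutatorElement, γ] using this
  have c2 : Commute (A * B) C := commutatorElement_eq_one_iff_commute.1 h2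
  have c3 : Commute A D := commutatorElement_eq_one_iff_commute.1 h3
  have c4 : Commute B D := commutatorElement_eq_one_iff_commute.1 h4
  have cABD : Commute (A * B) D := c3.mul_left c4
  rintro r (rfl | rfl | rfl | rfl | rfl) <;>
    simp only [map_commutatorElement, map_mul, map_inv, φ', γ, FreeGroup.lift_apply_of,
      Matrix.cons_val_zero, Matrix.cons_val_one, Matrix.head_cons,
      Matrix.cons_val_two, Matrix.tail_cons, Matrix.cons_val_three,
      ← hA, ← hB, ← hC, ← hD]
  · have e : C * (A * B)⁻¹ = (A * B)⁻¹ * C := c2.inv_left.eq.symm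
    have : C * ((A * B)⁻¹ * A * (A * B)) = (A * B)⁻¹ * (C * A) * (A * B) := by
      calc C * ((A * B)⁻¹ * A * (A * B)) = C * (A * B)⁻¹ * A * (A * B) := by group
        _ = (A * B)⁻¹ * C * A * (A * B) := by rw [e]
        _ = (A * B)⁻¹ * (C * A) * (A * B) := by group
    rw [this, ← inv_inv (A * B)]
    exact conj_comm _ _ _ h1
  · have : (A * B)⁻¹ * A * (A * B) * ((A * B)⁻¹ * B * (A * B)) = A * B := by group
    rw [this]; exact h2
  · exact commutatorElement_eq_one_iff_commute.2
      ((cABD.inv_left.mul_left c3).mul_left cABD)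
  · exact commutatorElement_eq_one_iff_commute.2
      ((cABD.inv_left.mul_left c4).mul_left cABD)
  · exact h5

theorem stmt_10 :
    (∀ r ∈ rels, φ r ∈ Subgroup.normalClosure rels) ∧
    ∃ ψ : PresentedGroup rels ≃* PresentedGroup rels,
      ∀ w : FreeGroup (Fin 4),
        ψ (PresentedGroup.mk rels w) = PresentedGroup.mk rels (φ w) := by
  have liftφ : FreeGroup.lift (fun i => PresentedGroup.mk rels (φ (γ i)))
      = (PresentedGroup.mk rels).comp φ := by
    ext i; simp [γ]
  have liftφ' : FreeGroup.lift (fun i => PresentedGroup.mk rels (φ' (γ i)))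
      = (PresentedGroup.mk rels).comp φ' := by
    ext i; simp [γ]
  have hf : ∀ r ∈ rels, FreeGroup.lift (fun i => PresentedGroup.mk rels (φ (γ i))) r = 1 := by
    rw [liftφ]; exact key
  have hg : ∀ r ∈ rels, FreeGroup.lift (fun i => PresentedGroup.mk rels (φ' (γ i))) r = 1 := by
    rw [liftφ']; exact key'
  refine ⟨fun r hr => (QuotientGroup.eq_one_iff _).1 (key r hr), ?_⟩
  set f := PresentedGroup.toGroup hf with hfdef
  set g := PresentedGroup.toGroup hg with hgdef
  have fmk : ∀ w, f (PresentedGroup.mk rels w) = PresentedGroup.mk rels (φ w) := by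
    intro w
    have : f (PresentedGroup.mk rels w)
        = FreeGroup.lift (fun i => PresentedGroup.mk rels (φ (γ i))) w := rfl
    rw [this, liftφ]; rfl
  have gmk : ∀ w, g (PresentedGroup.mk rels w) = PresentedGroup.mk rels (φ' w) := by
    intro w
    have : g (PresentedGroup.mk rels w)
        = FreeGroup.lift (fun i => PresentedGroup.mk rels (φ' (γ i))) w := rfl
    rw [this, liftφ']; rfl
  have hgf : ∀ x, g (f x) = x := by
    intro x
    induction x with
    | H w =>
      rw [fmk, gmk, show φ' (φ w) = w from congrArg (· w) (congrArg DFunLike.coe comp_id₁)]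
  have hfg : ∀ x, f (g x) = x := by
    intro x
    induction x with
    | H w =>
      rw [gmk, fmk, show φ (φ' w) = w from congrArg (· w) (congrArg DFunLike.coe comp_id₂)]
  exact ⟨⟨⟨f, g, hgf, hfg⟩, map_mul f⟩, fmk⟩
end
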